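/- arXiv:1209.3598 — 13 statements merged into one kernel-verified Lean document; each statement's English description precedes it below -/
import Mathlib

section
/- Let 1 ≤ v_1 ≤ v_2 ≤ n and 0 ≤ r ≤ d, and set p_i = v_1 for i ≤ r and p_i = v_2 for i > r. Then q_n(p_1,...,p_d) = Σ_{i=0}^{r} C(d,i) (v_2 - v_1)^i (n - v_2 + 1)^{d-i}. -/
/-!
Since the sorted tuple is a permutation of `x` and is monotone, the condition on the order
statistics says exactly that every entry of `x` is at least `v₁` and at most `r` entries are
below `v₂`. Grouping the tuples of `[v₁, n]^d` by the set `S` of coordinates whose entry is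
below `v₂`, each class is a box `[v₁, v₂)^S × [v₂, n]^(Sᶜ)`, and there are `C(d, i)` sets `S` of
size `i`.
-/

/-- The `i`-th smallest entry (with multiplicity) of the tuple `x`. -/
def sortedNth {d : ℕ} (x : Fin d → ℕ) (i : Fin d) : ℕ :=
  x (Tuple.sort x i)

/-- The `d`-tuples with entries in `[n] = {1,…,n}`. -/
def tuples (n d : ℕ) : Finset (Fin d → ℕ) :=
  Fintype.piFinset fun _ => Finset.Icc 1 n

/-- `q_n(p_1,…,p_d)`: the number of `x ∈ [n]^d` whose `i`-th smallest
entry is at least `p_i` for every `i`. -/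
def qn (n d : ℕ) (p : Fin d → ℕ) : ℕ :=
  ((tuples n d).filter fun x => ∀ i, p i ≤ sortedNth x i).card

open Finset Fintype

section SortedTuples

variable {d : ℕ}

lemma monotone_sortedNth (x : Fin d → ℕ) : Monotone (sortedNth x) :=
  Tuple.monotone_sort x

lemma card_filter_sortedNth (x : Fin d → ℕ) (P : ℕ → Prop) [DecidablePred P] :
    #{i | P (sortedNth x i)} = #{j | P (x j)} :=
  card_equiv (Tuple.sort x) fun i => by simp only [mem_filter_univ]; rfl

lemma forall_le_sortedNth_iff (x : Fin d → ℕ) (v : ℕ) :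
    (∀ i, v ≤ sortedNth x i) ↔ ∀ j, v ≤ x j :=
  (Tuple.sort x).forall_congr_right (q := fun j => v ≤ x j)

/-- Since `f` is monotone, `{i | f i < v}` is an initial segment of `Fin d`. -/
lemma Monotone.card_filter_lt_le_iff {f : Fin d → ℕ} (hf : Monotone f) (r v : ℕ) :
    #{i | f i < v} ≤ r ↔ ∀ i : Fin d, r ≤ i → v ≤ f i := by
  constructor
  · intro h i hri
    by_contra! hlt
    have hsub : Iic i ⊆ ({j | f j < v} : Finset (Fin d)) := fun j hj =>
      mem_filter.2 ⟨mem_univ j, (hf (mem_Iic.1 hj)).trans_lt hlt⟩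
    have := card_le_card hsub
    rw [Fin.card_Iic] at this
    omega
  · intro h
    calc #{i | f i < v} ≤ #{i : Fin d | (i : ℕ) < r} := by
          refine card_le_card fun i hi => ?_
          simp only [mem_filter, mem_univ, true_and] at hi ⊢
          by_contra! hri
          exact (h i hri).not_gt hi
      _ ≤ #(range r) :=
          card_le_card_of_injOn (↑) (fun i hi => by simpa using hi) Fin.val_injective.injOn
      _ = r := card_range r

lemma forall_ite_le_sortedNth_iff (x : Fin d → ℕ) {r v₁ v₂ : ℕ} (h12 : v₁ ≤ v₂) :
    (∀ i : Fin d, (if (i : ℕ) < r then v₁ else v₂) ≤ sortedNth x i) ↔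
      (∀ j, v₁ ≤ x j) ∧ #{j | x j < v₂} ≤ r := by
  rw [← forall_le_sortedNth_iff, ← card_filter_sortedNth x (· < v₂),
    (monotone_sortedNth x).card_filter_lt_le_iff]
  constructor
  · intro h
    refine ⟨fun i => ?_, fun i hri => ?_⟩ <;> have := h i <;> split_ifs at this <;> omega
  · rintro ⟨h₁, h₂⟩ i
    split_ifs with hri
    · exact h₁ i
    · exact h₂ i (not_lt.1 hri)

end SortedTuples

section CountingTuples

variable {α : Type*} {d : ℕ} (A : Finset α) (p : α → Prop) [DecidablePred p]

lemma card_filter_piFinset_filter_eq (S : Finset (Fin d)) :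
    #{x ∈ piFinset fun _ : Fin d => A | ({j | p (x j)} : Finset (Fin d)) = S} =
      #{a ∈ A | p a} ^ #S * #{a ∈ A | ¬p a} ^ (d - #S) := by
  have hfiber : {x ∈ piFinset fun _ : Fin d => A | ({j | p (x j)} : Finset (Fin d)) = S} =
      piFinset fun j : Fin d => if j ∈ S then {a ∈ A | p a} else {a ∈ A | ¬p a} := by
    ext x
    simp only [mem_filter, mem_piFinset, Finset.ext_iff, ← forall_and]
    refine forall_congr' fun j => ?_
    by_cases hj : j ∈ S <;> simp [hj]
  rw [hfiber, card_piFinset]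
  simp [apply_ite card, prod_ite, filter_notMem_eq_sdiff, ← compl_eq_univ_sdiff, card_compl]

lemma card_filter_piFinset_card_filter_eq (i : ℕ) :
    #{x ∈ piFinset fun _ : Fin d => A | #{j | p (x j)} = i} =
      d.choose i * #{a ∈ A | p a} ^ i * #{a ∈ A | ¬p a} ^ (d - i) := by
  rw [card_eq_sum_card_fiberwise (f := fun x : Fin d → α => ({j | p (x j)} : Finset (Fin d)))
    (t := powersetCard i univ) fun x hx => by simpa using (mem_filter.1 hx).2]
  have hfiber : ∀ S ∈ powersetCard i univ,
      #{x ∈ {x ∈ piFinset fun _ : Fin d => A | #{j | p (x j)} = i} |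
          ({j | p (x j)} : Finset (Fin d)) = S} =
        #{a ∈ A | p a} ^ i * #{a ∈ A | ¬p a} ^ (d - i) := by
    intro S hS
    rw [mem_powersetCard_univ] at hS
    rw [filter_filter, ← hS, ← card_filter_piFinset_filter_eq]
    congr 1
    exact filter_congr fun x _ => ⟨And.right, fun h => ⟨h ▸ rfl, h⟩⟩
  rw [sum_congr rfl hfiber, sum_const, card_powersetCard, card_univ, Fintype.card_fin,
    smul_eq_mul, mul_assoc]

lemma card_filter_piFinset_card_filter_le (r : ℕ) :
    #{x ∈ piFinset fun _ : Fin d => A | #{j | p (x j)} ≤ r} =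
      ∑ i ∈ range (r + 1), d.choose i * #{a ∈ A | p a} ^ i * #{a ∈ A | ¬p a} ^ (d - i) := by
  rw [card_eq_sum_card_fiberwise (f := fun x : Fin d → α => #{j | p (x j)}) (t := range (r + 1))
    fun x hx => by simpa [Nat.lt_succ_iff] using (mem_filter.1 hx).2]
  refine sum_congr rfl fun i hi => ?_
  rw [filter_filter, ← card_filter_piFinset_card_filter_eq]
  congr 1
  refine filter_congr fun x _ => ?_
  have := mem_range.1 hi
  exact ⟨And.right, fun h => ⟨by omega, h⟩⟩

end CountingTuples

theorem qn_two_values_general (n d r v₁ v₂ : ℕ) (hv₁ : 1 ≤ v₁) (h12 : v₁ ≤ v₂)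
    (hv₂ : v₂ ≤ n) :
    qn n d (fun i => if i.val < r then v₁ else v₂) =
      ∑ i ∈ Finset.range (r + 1),
        d.choose i * (v₂ - v₁) ^ i * (n - v₂ + 1) ^ (d - i) := by
  have hbox : {x ∈ tuples n d | ∀ j, v₁ ≤ x j} = piFinset fun _ : Fin d => Icc v₁ n := by
    ext x
    simp only [tuples, mem_filter, mem_piFinset, mem_Icc, ← forall_and]
    exact forall_congr' fun j => by omega
  have hbelow : {a ∈ Icc v₁ n | a < v₂} = Ico v₁ v₂ := by
    ext a
    simp only [mem_filter, mem_Icc, mem_Ico]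
    omega
  have habove : {a ∈ Icc v₁ n | ¬a < v₂} = Icc v₂ n := by
    ext a
    simp only [mem_filter, mem_Icc]
    omega
  simp_rw [qn, forall_ite_le_sortedNth_iff _ h12]
  rw [← filter_filter, hbox, card_filter_piFinset_card_filter_le _ (· < v₂), hbelow, habove,
    Nat.card_Ico, Nat.card_Icc, Nat.sub_add_comm hv₂]

/-- If `p_i = v₁` for `i ≤ r` and `p_i = v₂` for `i > r` (1-indexed), with
`1 ≤ v₁ ≤ v₂ ≤ n` and `0 ≤ r ≤ d`, then
`q_n(p) = Σ_{i=0}^{r} C(d,i) (v₂−v₁)^i (n−v₂+1)^{d−i}`. -/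
theorem qn_two_values (n d r v₁ v₂ : ℕ) (hv₁ : 1 ≤ v₁) (h12 : v₁ ≤ v₂)
    (hv₂ : v₂ ≤ n) (hr : r ≤ d) :
    qn n d (fun i => if i.val < r then v₁ else v₂) =
      ∑ i ∈ Finset.range (r + 1),
        d.choose i * (v₂ - v₁) ^ i * (n - v₂ + 1) ^ (d - i) :=
  qn_two_values_general n d r v₁ v₂ hv₁ h12 hv₂
end

section
/- Let 1 ≤ p_1 ≤ ... ≤ p_d ≤ n and let I = {i_1 < i_2 < ... < i_t} ⊆ [d] be nonempty. Then |∩_{i ∈ I} L_i(p_i)| = (d! / (i_1! (i_2 - i_1)! ... (i_t - i_{t-1})! (d - i_t)!)) · (p_{i_1} - 1)^{i_1} · ∏_{j=2}^{t} (p_{i_j} - p_{i_{j-1}})^{i_j - i_{j-1}} · (n - p_{i_t} + 1)^{d - i_t}. -/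
/-- `L_i(t)`: the set of `x ∈ [n]^d` having exactly `i` coordinates
strictly smaller than `t`. -/
def L (n d i t : ℕ) : Finset (Fin d → ℕ) :=
  (tuples n d).filter fun x => (Finset.univ.filter fun j => x j < t).card = i

/-!
Pad the data with `i_0 = 0`, `i_{t+1} = d` and thresholds
`q_0 = 1 ≤ p_{i_1} ≤ … ≤ p_{i_t} ≤ q_{t+1} = n + 1`, and colour a value `v ∈ [n]` by the `k`
with `q_k ≤ v < q_{k+1}`. The conditions on `x` say exactly that colour `k` occurs at
`i_{k+1} - i_k` coordinates, and words with prescribed colour counts are counted by the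
coefficients of `(∑_k (q_{k+1} - q_k) X_k)^d`, which the multinomial theorem evaluates.
-/

open Finset MvPolynomial
open scoped Nat

theorem card_filter_piFinset_card_fiber_eq {α β σ : Type*} [Fintype α] [DecidableEq α]
    [Fintype σ] [DecidableEq σ] (T : Finset β) (b : β → σ) (m : σ → ℕ)
    (hm : ∑ j, m j = Fintype.card α) :
    #{x ∈ Fintype.piFinset fun _ : α => T | ∀ j, #{c | b (x c) = j} = m j} =
      Nat.multinomial univ m * ∏ j, #{v ∈ T | b v = j} ^ m j := by
  -- Both sides are the coefficient of `X ^ m` in `∏ c : α, ∑ v ∈ T, X (b v)`.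
  set m' : σ →₀ ℕ := Finsupp.equivFunOnFinite.symm m
  have hcount : ∀ x : α → β, (∑ c, Finsupp.single (b (x c)) 1 = m') ↔
      ∀ j, #{c | b (x c) = j} = m j := by
    intro x
    simp [Finsupp.ext_iff, Finsupp.finsetSum_apply, Finsupp.single_apply, m', eq_comm]
  have hexpand : coeff m' (∏ _c : α, ∑ v ∈ T, (X (b v) : MvPolynomial σ ℕ)) =
      #{x ∈ Fintype.piFinset fun _ : α => T | ∀ j, #{c | b (x c) = j} = m j} := by
    rw [prod_univ_sum, coeff_sum]
    simp_rw [X, ← monomial_sum_one, coeff_monomial, hcount]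
    rw [sum_boole, Nat.cast_id]
  have hcollect :
      ∑ v ∈ T, (X (b v) : MvPolynomial σ ℕ) = ∑ j, #{v ∈ T | b v = j} • X j := by
    rw [← sum_fiberwise T b]
    refine sum_congr rfl fun j _ => ?_
    rw [sum_congr rfl fun v hv => by rw [(mem_filter.1 hv).2], sum_const]
  rw [← hexpand, hcollect, prod_const, card_univ, coeff_linearCombination_X_pow_of_fintype,
    Finsupp.sum_fintype _ _ (fun _ => rfl), if_pos (show ∑ j, m' j = _ from hm),
    Finsupp.multinomial_eq_of_support_subset (subset_univ _),
    Finsupp.prod_fintype _ _ (fun _ => pow_zero _)]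
  rfl

theorem forall_card_eq_sub_iff_forall_card_lt_eq {α : Type*} [Fintype α] {K : ℕ}
    (g : α → Fin (K + 1)) {e : ℕ → ℕ} (he : Monotone e) (he0 : e 0 = 0)
    (heK : e (K + 1) = Fintype.card α) :
    (∀ j : Fin (K + 1), #{c | g c = j} = e (j + 1) - e j) ↔
      ∀ j : Fin K, #{c | (g c : ℕ) < j + 1} = e (j + 1) := by
  set C : ℕ → ℕ := fun k => #{c | (g c : ℕ) < k}
  have hC0 : C 0 = 0 := by simp [C]
  have hCtop : C (K + 1) = Fintype.card α := by
    simp only [C, filter_true_of_mem fun c _ => (g c).isLt, card_univ]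
  have hCsucc : ∀ j : Fin (K + 1), C (j + 1) = C j + #{c | g c = j} := by
    intro j
    simp only [C, card_filter, ← sum_add_distrib]
    refine sum_congr rfl fun c _ => ?_
    split_ifs <;> simp_all [Fin.ext_iff] <;> omega
  have hextend : (∀ j : Fin K, C (j + 1) = e (j + 1)) ↔ ∀ k ≤ K + 1, C k = e k := by
    refine ⟨fun h k hk => ?_, fun h j => h _ (by omega)⟩
    rcases k with _ | k
    · rw [hC0, he0]
    rcases hk.lt_or_eq with hlt | hKk
    · exact h ⟨k, by omega⟩
    · rw [hKk, hCtop, heK]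
  change _ ↔ ∀ j : Fin K, C (j + 1) = e (j + 1)
  rw [hextend]
  constructor
  · intro h k hk
    induction k with
    | zero => rw [hC0, he0]
    | succ k ih =>
      rw [hCsucc ⟨k, by omega⟩, ih (by omega), h]
      exact Nat.add_sub_cancel' (he k.le_succ)
  · intro h j
    have := hCsucc j
    rw [h j (by omega), h (j + 1) (by omega)] at this
    omega

theorem card_filter_le_lt_iff {q : ℕ → ℕ} (hq : Monotone q) {K v k : ℕ}
    (hv : v ∈ Ico (q 0) (q (K + 1))) (hk : k ≤ K + 1) :
    #{i ∈ Icc 1 K | q i ≤ v} < k ↔ v < q k := by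
  rw [mem_Ico] at hv
  constructor
  · intro h
    by_contra! hle
    have hsub : Icc 1 k ⊆ {i ∈ Icc 1 K | q i ≤ v} := by
      intro i hi
      rw [mem_Icc] at hi
      have hkK : k ≠ K + 1 := by rintro rfl; omega
      exact mem_filter.2 ⟨mem_Icc.2 ⟨hi.1, by omega⟩, (hq hi.2).trans hle⟩
    simpa using (card_le_card hsub).trans_lt h
  · intro h
    have hk0 : k ≠ 0 := by rintro rfl; omega
    have hsub : {i ∈ Icc 1 K | q i ≤ v} ⊆ Ico 1 k := by
      intro i hi
      rw [mem_filter, mem_Icc] at hi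
      exact mem_Ico.2 ⟨hi.1.1, by_contra fun hik => by have := hq (not_lt.1 hik); omega⟩
    have := card_le_card hsub
    simp only [Nat.card_Ico] at this
    omega

theorem card_filter_card_lt_eq {α : Type*} [Fintype α] [DecidableEq α] {K : ℕ}
    {q e : ℕ → ℕ} (hq : Monotone q) (he : Monotone e) (he0 : e 0 = 0)
    (heK : e (K + 1) = Fintype.card α) :
    #{x ∈ Fintype.piFinset fun _ : α => Ico (q 0) (q (K + 1)) |
        ∀ j : Fin K, #{c | x c < q (j + 1)} = e (j + 1)} =
      Nat.multinomial (range (K + 1)) (fun k => e (k + 1) - e k) *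
        ∏ k ∈ range (K + 1), (q (k + 1) - q k) ^ (e (k + 1) - e k) := by
  -- `level v` is the `k` with `v ∈ [q k, q (k + 1))`.
  set level : ℕ → Fin (K + 1) := fun v =>
    ⟨#{i ∈ Icc 1 K | q i ≤ v}, (card_filter_le _ _).trans_lt (by simp)⟩
  have hlevel : ∀ v ∈ Ico (q 0) (q (K + 1)), ∀ k ≤ K + 1, (level v : ℕ) < k ↔ v < q k :=
    fun v hv k hk => card_filter_le_lt_iff hq hv hk
  have hcond : ∀ x ∈ Fintype.piFinset fun _ : α => Ico (q 0) (q (K + 1)),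
      (∀ j : Fin K, #{c | x c < q (j + 1)} = e (j + 1)) ↔
        ∀ j, #{c | level (x c) = j} = e (j + 1) - e j := by
    intro x hx
    rw [forall_card_eq_sub_iff_forall_card_lt_eq (fun c => level (x c)) he he0 heK]
    refine forall_congr' fun j => ?_
    rw [Fintype.mem_piFinset] at hx
    simp only [hlevel _ (hx _) (j + 1) (by omega)]
  have hbucket : ∀ j : Fin (K + 1),
      #{v ∈ Ico (q 0) (q (K + 1)) | level v = j} = q (j + 1) - q j := by
    intro j
    have hsub : Ico (q j) (q (j + 1)) ⊆ Ico (q 0) (q (K + 1)) :=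
      Ico_subset_Ico (hq (Nat.zero_le _)) (hq (by omega))
    rw [← Nat.card_Ico, ← inter_eq_right.2 hsub, ← filter_mem_eq_inter]
    refine congrArg card (filter_congr fun v hv => ?_)
    rw [Fin.ext_iff, mem_Ico, ← not_lt, ← hlevel v hv j (by omega),
      ← hlevel v hv (j + 1) (by omega)]
    omega
  have hsum : ∑ j : Fin (K + 1), (e (j + 1) - e j) = Fintype.card α := by
    rw [Fin.sum_univ_eq_sum_range (fun k => e (k + 1) - e k), sum_range_tsub he, he0, heK,
      Nat.sub_zero]
  rw [filter_congr hcond]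
  -- The left-hand sides differ only in the `Decidable` instance of `∀ j : Fin (K + 1), _`.
  convert card_filter_piFinset_card_fiber_eq (Ico (q 0) (q (K + 1))) level _ hsum using 2
  · congr!
  · unfold Nat.multinomial
    rw [Fin.sum_univ_eq_sum_range (fun k => e (k + 1) - e k),
      Fin.prod_univ_eq_prod_range (fun k => (e (k + 1) - e k).factorial)]
  · rw [← Fin.prod_univ_eq_prod_range (fun k => (q (k + 1) - q k) ^ (e (k + 1) - e k))]
    simp only [hbucket]

theorem prod_range_succ_eq_mul_prod_filter_pos_mul {M : Type*} [CommMonoid M] {t : ℕ}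
    (ht : 0 < t) (f : ℕ → M) :
    ∏ k ∈ range (t + 1), f k = f 0 * (∏ j : Fin t with 0 < j.val, f j) * f t := by
  rw [prod_range_succ, ← Fin.prod_univ_eq_prod_range,
    ← mul_prod_erase univ _ (mem_univ ⟨0, ht⟩)]
  congr 3
  ext j
  simp [Fin.ext_iff, Nat.pos_iff_ne_zero]

def bracketSeq {α : Type*} {t : ℕ} (a : α) (f : Fin t → α) (b : α) : ℕ → α
  | 0 => a
  | k + 1 => if h : k < t then f ⟨k, h⟩ else b

section bracketSeq

variable {α : Type*} {t : ℕ} {a b : α} {f : Fin t → α}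

@[simp] theorem bracketSeq_zero : bracketSeq a f b 0 = a := rfl

@[simp] theorem bracketSeq_succ (j : Fin t) : bracketSeq a f b (j + 1) = f j := by
  simp [bracketSeq]

@[simp] theorem bracketSeq_add_one_self : bracketSeq a f b (t + 1) = b := by
  simp [bracketSeq]

theorem bracketSeq_of_pos_of_le {k : ℕ} (hk0 : 0 < k) (hkt : k ≤ t) :
    bracketSeq a f b k = f ⟨k - 1, by omega⟩ := by
  obtain ⟨k, rfl⟩ := Nat.exists_eq_add_of_le' hk0
  exact bracketSeq_succ ⟨k, by omega⟩

theorem monotone_bracketSeq [Preorder α] (hf : Monotone f) (ha : ∀ j, a ≤ f j)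
    (hb : ∀ j, f j ≤ b) (hab : a ≤ b) : Monotone (bracketSeq a f b) := by
  refine monotone_nat_of_le_succ fun k => ?_
  cases k with
  | zero => by_cases h : 0 < t <;> simp [bracketSeq, h, ha, hab]
  | succ k =>
    simp only [bracketSeq]
    split_ifs with h1 h2 h2
    · exact hf (Fin.mk_le_mk.2 k.le_succ)
    · exact hb _
    · omega
    · exact le_rfl

theorem prod_range_bracketSeq {M : Type*} [CommMonoid M] (ht : 0 < t) (F : α → α → M) :
    ∏ k ∈ range (t + 1), F (bracketSeq a f b k) (bracketSeq a f b (k + 1)) =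
      F a (f ⟨0, ht⟩) * (∏ j : Fin t with 0 < j.val, F (f ⟨j - 1, by omega⟩) (f j)) *
        F (f ⟨t - 1, by omega⟩) b := by
  rw [prod_range_succ_eq_mul_prod_filter_pos_mul ht, bracketSeq_add_one_self,
    bracketSeq_of_pos_of_le ht le_rfl, bracketSeq_zero, bracketSeq_succ ⟨0, ht⟩]
  congr 2
  refine prod_congr rfl fun j hj => ?_
  rw [bracketSeq_succ, bracketSeq_of_pos_of_le (mem_filter.1 hj).2 j.isLt.le]

end bracketSeq

/-- For `1 ≤ p_1 ≤ … ≤ p_d ≤ n` (here `p : ℕ → ℕ`, with hypotheses only on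
indices in `[d]`) and a nonempty `I = {i_1 < … < i_t} ⊆ [d]` (given by the
strictly monotone `ii : Fin t → ℕ`), the cardinality of `∩_{i ∈ I} L_i(p_i)`
equals the multinomial expression of the paper. -/
theorem card_inter_L (n d t : ℕ) (ht : 0 < t) (p : ℕ → ℕ)
    (hpmono : ∀ j k, 1 ≤ j → j ≤ k → k ≤ d → p j ≤ p k)
    (hp : ∀ j, 1 ≤ j → j ≤ d → 1 ≤ p j ∧ p j ≤ n)
    (ii : Fin t → ℕ) (hmono : StrictMono ii)
    (hlb : 1 ≤ ii ⟨0, ht⟩) (hub : ii ⟨t - 1, by omega⟩ ≤ d) :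
    ((tuples n d).filter fun x => ∀ j : Fin t,
        (Finset.univ.filter fun c => x c < p (ii j)).card = ii j).card =
      Nat.factorial d /
          (Nat.factorial (ii ⟨0, ht⟩) *
            (∏ j ∈ Finset.univ.filter fun j : Fin t => 0 < j.val,
              Nat.factorial (ii j - ii ⟨j.val - 1, by have := j.isLt; omega⟩)) *
            Nat.factorial (d - ii ⟨t - 1, by omega⟩)) *
        (p (ii ⟨0, ht⟩) - 1) ^ ii ⟨0, ht⟩ *
        (∏ j ∈ Finset.univ.filter fun j : Fin t => 0 < j.val,
          (p (ii j) - p (ii ⟨j.val - 1, by have := j.isLt; omega⟩)) ^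
            (ii j - ii ⟨j.val - 1, by have := j.isLt; omega⟩)) *
        (n - p (ii ⟨t - 1, by omega⟩) + 1) ^ (d - ii ⟨t - 1, by omega⟩) := by
  have hii : ∀ j, 1 ≤ ii j ∧ ii j ≤ d := fun j =>
    ⟨hlb.trans (hmono.monotone (Fin.mk_le_mk.2 (Nat.zero_le _))),
      (hmono.monotone (Fin.le_iff_val_le_val.2 (by simp; omega))).trans hub⟩
  have hpii : ∀ j, 1 ≤ p (ii j) ∧ p (ii j) ≤ n := fun j => hp _ (hii j).1 (hii j).2
  set P := bracketSeq (1, 0) (fun j => (p (ii j), ii j)) (n + 1, d) with hPdef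
  have hP : Monotone P := monotone_bracketSeq
    (fun i j h => Prod.mk_le_mk.2 ⟨hpmono _ _ (hii i).1 (hmono.monotone h) (hii j).2,
      hmono.monotone h⟩)
    (fun j => Prod.mk_le_mk.2 ⟨(hpii j).1, Nat.zero_le _⟩)
    (fun j => Prod.mk_le_mk.2 ⟨(hpii j).2.trans n.le_succ, (hii j).2⟩)
    (Prod.mk_le_mk.2 ⟨by omega, Nat.zero_le _⟩)
  have hcount := card_filter_card_lt_eq (α := Fin d) (K := t) (monotone_fst.comp hP)
    (monotone_snd.comp hP) rfl (by simp [P])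
  simp only [Function.comp, hPdef, bracketSeq_succ, bracketSeq_zero, bracketSeq_add_one_self,
    Ico_add_one_right_eq_Icc] at hcount
  rw [tuples, hcount, Nat.multinomial,
    sum_range_tsub (f := fun k => (P k).2) (monotone_snd.comp hP),
    prod_range_bracketSeq ht fun u v : ℕ × ℕ => (v.2 - u.2)!,
    prod_range_bracketSeq ht fun u v : ℕ × ℕ => (v.1 - u.1) ^ (v.2 - u.2)]
  simp only [hPdef, bracketSeq_zero, bracketSeq_add_one_self, Nat.sub_zero,
    Nat.sub_add_comm (hpii _).2, mul_assoc]
end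

section
/- For nonnegative integers a_1,...,a_d, b_1,...,b_d with a = max_i a_i: Q(a_1,...,a_d,b_1,...,b_d) = Σ_{∅ ≠ I ⊆ S_d} (-1)^{|I|+1} ∏_{i=1}^d C(a^I_i + b_i, b_i), where S_d is the set of permutations of [d] and a^I_i = min_{π ∈ I} a_{π(i)}. -/
/-- `Q(a_1,…,a_d,b_1,…,b_d)`: with `a = max_i a_i` and disjoint sets
`U_i = {i} × [a+b_i]`, the number of sets `S ⊆ U_1 ∪ … ∪ U_d` for which
there is a permutation `π` of `[d]` such that `S ∩ U_i` is a subset of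
`[a_{π(i)} + b_i]` of size `b_i`, for every `i`. -/
def QQ (d : ℕ) (a b : Fin d → ℕ) : ℕ :=
  (((Finset.univ : Finset (Fin d)).biUnion fun i =>
      (Finset.Icc 1 (Finset.univ.sup a + b i)).image fun x => (i, x)).powerset.filter
    fun S => ∃ π : Equiv.Perm (Fin d), ∀ i,
      ((S.filter fun u => u.1 = i).image Prod.snd ⊆ Finset.Icc 1 (a (π i) + b i)) ∧
      (S.filter fun u => u.1 = i).card = b i).card

open Finset

lemma snd_injOn (d : ℕ) (S : Finset (Fin d × ℕ)) (i : Fin d) :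
    Set.InjOn (Prod.snd : Fin d × ℕ → ℕ) ↑(S.filter fun u => u.1 = i) := by
  intro u hu v hv h
  simp only [coe_filter, Set.mem_setOf_eq] at hu hv
  exact Prod.ext (hu.2.trans hv.2.symm) h

lemma count_aux (d : ℕ) (b c m : Fin d → ℕ) (hm : ∀ i, m i ≤ c i) :
    #((((Finset.univ : Finset (Fin d)).biUnion fun i =>
        (Finset.Icc 1 (c i)).image fun x => (i, x)).powerset.filter
      fun S => ∀ i, ((S.filter fun u => u.1 = i).image Prod.snd ⊆ Finset.Icc 1 (m i)) ∧
        (S.filter fun u => u.1 = i).card = b i))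
    = ∏ i, (m i).choose (b i) := by
  classical
  have key : #((((Finset.univ : Finset (Fin d)).biUnion fun i =>
        (Finset.Icc 1 (c i)).image fun x => (i, x)).powerset.filter
      fun S => ∀ i, ((S.filter fun u => u.1 = i).image Prod.snd ⊆ Finset.Icc 1 (m i)) ∧
        (S.filter fun u => u.1 = i).card = b i))
      = #(Finset.univ.pi fun i => (Finset.Icc 1 (m i)).powersetCard (b i)) := by
    refine card_bij' (fun S _ => fun i _ => (S.filter fun u => u.1 = i).image Prod.snd)
      (fun g _ => Finset.univ.biUnion fun i => (g i (mem_univ i)).image fun x => (i, x))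
      ?_ ?_ ?_ ?_
    · intro S hS
      rw [mem_filter] at hS
      rw [mem_pi]
      intro i hi
      rw [mem_powersetCard]
      exact ⟨(hS.2 i).1, by rw [card_image_of_injOn (snd_injOn d S i)]; exact (hS.2 i).2⟩
    · intro g hg
      rw [mem_pi] at hg
      have fib : ∀ i, ((Finset.univ.biUnion fun j => (g j (mem_univ j)).image
          fun x => (j, x)).filter fun u => u.1 = i) = (g i (mem_univ i)).image fun x => (i, x) := by
        intro i
        ext u
        simp only [mem_filter, mem_biUnion, mem_univ, true_and, mem_image]
        constructor
        · rintro ⟨⟨j, x, hx, rfl⟩, h⟩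
          exact ⟨x, by simpa using h ▸ hx, by simp [← h]⟩
        · rintro ⟨x, hx, rfl⟩
          exact ⟨⟨i, x, hx, rfl⟩, rfl⟩
      rw [mem_filter]
      constructor
      · rw [mem_powerset]
        intro u hu
        simp only [mem_biUnion, mem_univ, true_and, mem_image] at hu ⊢
        obtain ⟨j, x, hx, rfl⟩ := hu
        have := (mem_powersetCard.1 (hg j (mem_univ j))).1 hx
        exact ⟨j, x, Finset.Icc_subset_Icc le_rfl (hm j) this, rfl⟩
      · intro i
        rw [fib i]
        have hgi := mem_powersetCard.1 (hg i (mem_univ i))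
        constructor
        · intro y hy
          simp only [mem_image] at hy
          obtain ⟨u, ⟨x, hx, rfl⟩, rfl⟩ := hy
          exact hgi.1 hx
        · rw [card_image_of_injective _ (fun x y h => by simpa using h)]
          exact hgi.2
    · intro S hS
      rw [mem_filter] at hS
      ext u
      simp only [mem_biUnion, mem_univ, true_and, mem_image, mem_filter]
      constructor
      · rintro ⟨i, x, ⟨v, ⟨hv, rfl⟩, rfl⟩, rfl⟩
        exact hv
      · intro hu
        exact ⟨u.1, u.2, ⟨u, ⟨hu, rfl⟩, rfl⟩, rfl⟩
    · intro g hg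
      rw [mem_pi] at hg
      funext i hi
      ext y
      simp only [mem_image, mem_filter, mem_biUnion, mem_univ, true_and]
      constructor
      · rintro ⟨u, ⟨⟨j, x, hx, rfl⟩, h⟩, rfl⟩
        simpa using h ▸ hx
      · intro hy
        exact ⟨(i, y), ⟨⟨i, y, hy, rfl⟩, rfl⟩, rfl⟩
  rw [key, Finset.card_pi]
  exact Finset.prod_congr rfl fun i _ => by rw [card_powersetCard, Nat.card_Icc]; simp


/-- Inclusion–exclusion formula for `Q`: summing over nonempty sets `I` of
permutations of `[d]`, with `a^I_i = min_{π ∈ I} a_{π(i)}`. -/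
theorem QQ_formula (d : ℕ) (a b : Fin d → ℕ) :
    (QQ d a b : ℤ) =
      ∑ I ∈ (Finset.univ : Finset (Finset (Equiv.Perm (Fin d)))).filter
          fun I => I.Nonempty,
        (-1 : ℤ) ^ (I.card + 1) *
          ∏ i : Fin d,
            ((sInf ((fun π : Equiv.Perm (Fin d) => a (π i)) '' (I : Set _)) + b i).choose
              (b i) : ℤ) := by
  classical
  set U : Finset (Fin d × ℕ) := (Finset.univ : Finset (Fin d)).biUnion fun i =>
      (Finset.Icc 1 (Finset.univ.sup a + b i)).image fun x => (i, x) with hU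
  set F : Equiv.Perm (Fin d) → Finset (Finset (Fin d × ℕ)) := fun π =>
    U.powerset.filter fun S => ∀ i,
      ((S.filter fun u => u.1 = i).image Prod.snd ⊆ Finset.Icc 1 (a (π i) + b i)) ∧
      (S.filter fun u => u.1 = i).card = b i with hF
  have h1 : QQ d a b = #((Finset.univ : Finset (Equiv.Perm (Fin d))).biUnion F) := by
    unfold QQ
    congr 1
    ext S
    simp only [hF, mem_filter, mem_biUnion, mem_univ, true_and, ← hU]
    tauto
  have key : ∀ I : Finset (Equiv.Perm (Fin d)), ∀ hI : I.Nonempty,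
      (#(I.inf' hI F) : ℤ) = ∏ i : Fin d,
        ((sInf ((fun π : Equiv.Perm (Fin d) => a (π i)) '' (I : Set _)) + b i).choose
          (b i) : ℤ) := by
    intro I hI
    have hsInf : ∀ i, sInf ((fun π : Equiv.Perm (Fin d) => a (π i)) '' (I : Set _))
        = I.inf' hI fun π => a (π i) := by
      intro i
      apply le_antisymm
      · obtain ⟨π₀, hπ₀, hπeq⟩ := Finset.exists_mem_eq_inf' hI fun π => a (π i)
        exact hπeq ▸ Nat.sInf_le ⟨π₀, hπ₀, rfl⟩
      · have hne : ((fun π : Equiv.Perm (Fin d) => a (π i)) '' (I : Set _)).Nonempty :=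
          ⟨a (hI.choose i), hI.choose, hI.choose_spec, rfl⟩
        apply le_csInf hne
        rintro x ⟨π, hπ, rfl⟩
        exact Finset.inf'_le _ hπ
    have hset : I.inf' hI F = U.powerset.filter fun S => ∀ i,
        ((S.filter fun u => u.1 = i).image Prod.snd
          ⊆ Finset.Icc 1 ((I.inf' hI fun π => a (π i)) + b i)) ∧
        (S.filter fun u => u.1 = i).card = b i := by
      ext S
      rw [Finset.mem_inf']
      simp only [hF, mem_filter]
      constructor
      · intro h
        refine ⟨(h hI.choose hI.choose_spec).1, fun i => ⟨?_, ((h hI.choose hI.choose_spec).2 i).2⟩⟩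
        obtain ⟨π₀, hπ₀, hπeq⟩ := Finset.exists_mem_eq_inf' hI fun π => a (π i)
        rw [hπeq]
        exact ((h π₀ hπ₀).2 i).1
      · rintro ⟨hsub, h12⟩ π hπ
        exact ⟨hsub, fun i => ⟨subset_trans (h12 i).1
          (Finset.Icc_subset_Icc le_rfl (Nat.add_le_add_right (Finset.inf'_le _ hπ) _)),
          (h12 i).2⟩⟩
    have hcount := count_aux d b (fun i => Finset.univ.sup a + b i)
      (fun i => (I.inf' hI fun π => a (π i)) + b i)
      (fun i => Nat.add_le_add_right
        (le_trans (Finset.inf'_le _ hI.choose_spec) (Finset.le_sup (f := a) (mem_univ (hI.choose i)))) _)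
    have hnat : #(U.powerset.filter fun S => ∀ i,
        ((S.filter fun u => u.1 = i).image Prod.snd
          ⊆ Finset.Icc 1 ((I.inf' hI fun π => a (π i)) + b i)) ∧
        (S.filter fun u => u.1 = i).card = b i)
        = ∏ i : Fin d, ((sInf ((fun π : Equiv.Perm (Fin d) => a (π i)) '' (I : Set _))
            + b i).choose (b i)) :=
      hcount.trans (Finset.prod_congr rfl fun i _ => by rw [hsInf i]).symm
    rw [hset, hnat, Nat.cast_prod]
  rw [h1]
  calc (#((Finset.univ : Finset (Equiv.Perm (Fin d))).biUnion F) : ℤ)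
      = ∑ t : ((Finset.univ : Finset (Equiv.Perm (Fin d))).powerset.filter (·.Nonempty)),
        (-1 : ℤ) ^ (#t.1 + 1) * #(t.1.inf' (mem_filter.1 t.2).2 F) :=
      Finset.inclusion_exclusion_card_biUnion _ F
    _ = ∑ t : ((Finset.univ : Finset (Equiv.Perm (Fin d))).powerset.filter (·.Nonempty)),
        (-1 : ℤ) ^ (#t.1 + 1) * ∏ i : Fin d,
          ((sInf ((fun π : Equiv.Perm (Fin d) => a (π i)) '' (t.1 : Set _)) + b i).choose
            (b i) : ℤ) :=
      Finset.sum_congr rfl fun t _ => by rw [key t.1 (mem_filter.1 t.2).2]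
    _ = ∑ I ∈ (Finset.univ : Finset (Equiv.Perm (Fin d))).powerset.filter (·.Nonempty),
        (-1 : ℤ) ^ (#I + 1) * ∏ i : Fin d,
          ((sInf ((fun π : Equiv.Perm (Fin d) => a (π i)) '' (I : Set _)) + b i).choose
            (b i) : ℤ) :=
      Finset.sum_coe_sort ((Finset.univ : Finset (Equiv.Perm (Fin d))).powerset.filter
          (·.Nonempty))
        (fun I => (-1 : ℤ) ^ (#I + 1) * ∏ i : Fin d,
          ((sInf ((fun π : Equiv.Perm (Fin d) => a (π i)) '' (I : Set _)) + b i).choose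
            (b i) : ℤ))
    _ = _ := by rw [Finset.powerset_univ]
end

section
/- For nonnegative integers a_1 ≤ a_2 and b_1, b_2: Q(a_1,a_2,b_1,b_2) = C(a_1+b_1,b_1)·C(a_2+b_2,b_2) + C(a_2+b_1,b_1)·C(a_1+b_2,b_2) − C(a_1+b_1,b_1)·C(a_1+b_2,b_2). -/
set_option maxHeartbeats 1000000
open Finset

def Fmap (T₁ T₂ : Finset ℕ) : Finset (Fin 2 × ℕ) :=
  T₁.image (Prod.mk 0) ∪ T₂.image (Prod.mk 1)

lemma mem_Fmap (T₁ T₂ : Finset ℕ) (u : Fin 2 × ℕ) :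
    u ∈ Fmap T₁ T₂ ↔ (u.1 = 0 ∧ u.2 ∈ T₁) ∨ (u.1 = 1 ∧ u.2 ∈ T₂) := by
  obtain ⟨i, x⟩ := u
  simp [Fmap, Prod.ext_iff]
  aesop

lemma g0 (T₁ T₂ : Finset ℕ) :
    ((Fmap T₁ T₂).filter fun u => u.1 = 0).image Prod.snd = T₁ := by
  ext x; simp [Fmap, Finset.mem_filter]
lemma g1 (T₁ T₂ : Finset ℕ) :
    ((Fmap T₁ T₂).filter fun u => u.1 = 1).image Prod.snd = T₂ := by
  ext x; simp [Fmap, Finset.mem_filter]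
lemma cardf (S : Finset (Fin 2 × ℕ)) (i : Fin 2) :
    ((S.filter fun u => u.1 = i).image Prod.snd).card = (S.filter fun u => u.1 = i).card := by
  apply Finset.card_image_of_injOn
  intro u hu v hv huv
  simp [Finset.mem_filter] at hu hv
  exact Prod.ext (hu.2.trans hv.2.symm) huv

lemma Fmap_recover (S : Finset (Fin 2 × ℕ)) :
    Fmap ((S.filter fun u => u.1 = 0).image Prod.snd)
      ((S.filter fun u => u.1 = 1).image Prod.snd) = S := by
  ext u
  rw [mem_Fmap]
  obtain ⟨i, x⟩ := u
  fin_cases i <;> simp [Finset.mem_filter]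

lemma Fmap_mono {T₁ T₂ T₁' T₂' : Finset ℕ} (h1 : T₁ ⊆ T₁') (h2 : T₂ ⊆ T₂') :
    Fmap T₁ T₂ ⊆ Fmap T₁' T₂' :=
  Finset.union_subset_union (Finset.image_subset_image h1) (Finset.image_subset_image h2)

lemma perm_two (π : Equiv.Perm (Fin 2)) : π = 1 ∨ π = Equiv.swap 0 1 := by
  revert π; decide

theorem QQ_two (a₁ a₂ b₁ b₂ : ℕ) (h : a₁ ≤ a₂) :
    QQ 2 ![a₁, a₂] ![b₁, b₂] =
      (a₁ + b₁).choose b₁ * (a₂ + b₂).choose b₂ +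
      (a₂ + b₁).choose b₁ * (a₁ + b₂).choose b₂ -
      (a₁ + b₁).choose b₁ * (a₁ + b₂).choose b₂ := by
  classical
  have hsup : (Finset.univ.sup ![a₁, a₂]) = a₂ := by
    rw [show (Finset.univ : Finset (Fin 2)) = {0, 1} by decide]
    simp [sup_insert, h]
  set A : Finset (Finset ℕ × Finset ℕ) :=
    (Finset.Icc 1 (a₁+b₁)).powersetCard b₁ ×ˢ (Finset.Icc 1 (a₂+b₂)).powersetCard b₂ with hA
  set B : Finset (Finset ℕ × Finset ℕ) :=
    (Finset.Icc 1 (a₂+b₁)).powersetCard b₁ ×ˢ (Finset.Icc 1 (a₁+b₂)).powersetCard b₂ with hB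
  have key : (((Finset.univ : Finset (Fin 2)).biUnion fun i =>
      (Finset.Icc 1 (Finset.univ.sup ![a₁, a₂] + ![b₁, b₂] i)).image fun x => (i, x)).powerset.filter
    fun S => ∃ π : Equiv.Perm (Fin 2), ∀ i,
      ((S.filter fun u => u.1 = i).image Prod.snd ⊆ Finset.Icc 1 (![a₁, a₂] (π i) + ![b₁, b₂] i)) ∧
      (S.filter fun u => u.1 = i).card = ![b₁, b₂] i)
      = (A ∪ B).image fun p => Fmap p.1 p.2 := by
    have hG : ((Finset.univ : Finset (Fin 2)).biUnion fun i =>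
        (Finset.Icc 1 (Finset.univ.sup ![a₁, a₂] + ![b₁, b₂] i)).image fun x => (i, x))
        = Fmap (Finset.Icc 1 (a₂+b₁)) (Finset.Icc 1 (a₂+b₂)) := by
      rw [show (Finset.univ : Finset (Fin 2)) = {0, 1} by decide]
      simp [Finset.biUnion_insert, hsup, Fmap, sup_eq_right.mpr h]
    rw [hG]
    ext S
    simp only [Finset.mem_filter, Finset.mem_powerset, Finset.mem_image, Finset.mem_union]
    constructor
    · rintro ⟨hSG, π, hπ⟩
      refine ⟨((S.filter fun u => u.1 = 0).image Prod.snd,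
        (S.filter fun u => u.1 = 1).image Prod.snd), ?_, ?_⟩
      · have h0 := hπ 0
        have h1 := hπ 1
        rcases perm_two π with rfl | rfl
        · left
          simp only [hA, Finset.mem_product, Finset.mem_powersetCard]
          simp only [Equiv.Perm.one_apply, Matrix.cons_val_zero, Matrix.cons_val_one,
            Matrix.head_cons] at h0 h1
          exact ⟨⟨h0.1, (cardf S 0).trans h0.2⟩, ⟨h1.1, (cardf S 1).trans h1.2⟩⟩
        · right
          simp only [hB, Finset.mem_product, Finset.mem_powersetCard]
          simp only [Equiv.swap_apply_left, Equiv.swap_apply_right, Matrix.cons_val_zero,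
            Matrix.cons_val_one, Matrix.head_cons] at h0 h1
          exact ⟨⟨h0.1, (cardf S 0).trans h0.2⟩, ⟨h1.1, (cardf S 1).trans h1.2⟩⟩
      · exact Fmap_recover S
    · rintro ⟨⟨T₁, T₂⟩, hT, rfl⟩
      rcases hT with hT | hT
      · simp only [hA, Finset.mem_product, Finset.mem_powersetCard] at hT
        refine ⟨Fmap_mono (hT.1.1.trans (Finset.Icc_subset_Icc_right (by omega)))
          (hT.2.1.trans (Finset.Icc_subset_Icc_right (by omega))), 1, ?_⟩
        intro i
        fin_cases i
        · refine ⟨?_, ?_⟩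
          · show ((Fmap T₁ T₂).filter fun u => u.1 = 0).image Prod.snd ⊆ Finset.Icc 1 (a₁ + b₁)
            rw [g0]; exact hT.1.1
          · show ((Fmap T₁ T₂).filter fun u => u.1 = 0).card = b₁
            rw [← cardf, g0]; exact hT.1.2
        · refine ⟨?_, ?_⟩
          · show ((Fmap T₁ T₂).filter fun u => u.1 = 1).image Prod.snd ⊆ Finset.Icc 1 (a₂ + b₂)
            rw [g1]; exact hT.2.1
          · show ((Fmap T₁ T₂).filter fun u => u.1 = 1).card = b₂
            rw [← cardf, g1]; exact hT.2.2
      · simp only [hB, Finset.mem_product, Finset.mem_powersetCard] at hT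
        refine ⟨Fmap_mono (hT.1.1.trans (Finset.Icc_subset_Icc_right (by omega)))
          (hT.2.1.trans (Finset.Icc_subset_Icc_right (by omega))), Equiv.swap 0 1, ?_⟩
        intro i
        fin_cases i
        · refine ⟨?_, ?_⟩
          · show ((Fmap T₁ T₂).filter fun u => u.1 = 0).image Prod.snd ⊆ Finset.Icc 1 (a₂ + b₁)
            rw [g0]; exact hT.1.1
          · show ((Fmap T₁ T₂).filter fun u => u.1 = 0).card = b₁
            rw [← cardf, g0]; exact hT.1.2
        · refine ⟨?_, ?_⟩
          · show ((Fmap T₁ T₂).filter fun u => u.1 = 1).image Prod.snd ⊆ Finset.Icc 1 (a₁ + b₂)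
            rw [g1]; exact hT.2.1
          · show ((Fmap T₁ T₂).filter fun u => u.1 = 1).card = b₂
            rw [← cardf, g1]; exact hT.2.2
  have hinj : Set.InjOn (fun p : Finset ℕ × Finset ℕ => Fmap p.1 p.2) ↑(A ∪ B) := by
    intro p _ q _ hpq
    simp only at hpq
    have e0 : p.1 = q.1 := by rw [← g0 p.1 p.2, hpq, g0]
    have e1 : p.2 = q.2 := by rw [← g1 p.1 p.2, hpq, g1]
    exact Prod.ext e0 e1
  have hAB : A ∩ B = (Finset.Icc 1 (a₁+b₁)).powersetCard b₁ ×ˢ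
      (Finset.Icc 1 (a₁+b₂)).powersetCard b₂ := by
    ext ⟨T₁, T₂⟩
    simp only [hA, hB, Finset.mem_inter, Finset.mem_product, Finset.mem_powersetCard]
    constructor
    · rintro ⟨⟨⟨hs1, hc1⟩, hs2, hc2⟩, ⟨hs3, hc3⟩, hs4, hc4⟩
      exact ⟨⟨hs1, hc1⟩, hs4, hc4⟩
    · rintro ⟨⟨hs1, hc1⟩, hs4, hc4⟩
      exact ⟨⟨⟨hs1, hc1⟩, hs4.trans (Finset.Icc_subset_Icc_right (by omega)), hc4⟩,
        ⟨hs1.trans (Finset.Icc_subset_Icc_right (by omega)), hc1⟩, hs4, hc4⟩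
  have cardIcc : ∀ n : ℕ, (Finset.Icc 1 n).card = n := by
    intro n; rw [Nat.card_Icc]; omega
  have cA : A.card = (a₁ + b₁).choose b₁ * (a₂ + b₂).choose b₂ := by
    simp [hA, Finset.card_product, Finset.card_powersetCard, cardIcc]
  have cB : B.card = (a₂ + b₁).choose b₁ * (a₁ + b₂).choose b₂ := by
    simp [hB, Finset.card_product, Finset.card_powersetCard, cardIcc]
  have cI : (A ∩ B).card = (a₁ + b₁).choose b₁ * (a₁ + b₂).choose b₂ := by
    simp [hAB, Finset.card_product, Finset.card_powersetCard, cardIcc]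
  have hsub : A ∩ B ⊆ A := Finset.inter_subset_left
  have hle := Finset.card_le_card hsub
  have hcu := Finset.card_union_add_card_inter A B
  rw [QQ, key, Finset.card_image_of_injOn hinj]
  omega
end

section
/- For integers 1 ≤ p_1 ≤ ... ≤ p_d ≤ n, Q(n−p_1,...,n−p_d, 1,...,1) = q_n(p_1,...,p_d). -/
lemma perm_iff' {d : ℕ} (p x : Fin d → ℕ) (hmono : Monotone p) :
    (∃ π : Equiv.Perm (Fin d), ∀ i, p (π i) ≤ x i) ↔ ∀ i, p i ≤ sortedNth x i := by
  constructor
  · rintro ⟨π, hπ⟩ i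
    by_contra hlt
    push_neg at hlt
    set σ := Tuple.sort x with hσ
    have hx : Monotone (x ∘ σ) := Tuple.monotone_sort x
    have key : ∀ m ∈ (Finset.Iic i).image σ, π m ∈ Finset.Iio i := by
      rintro m hm
      obtain ⟨j, hj, rfl⟩ := Finset.mem_image.mp hm
      have h1 : x (σ j) ≤ x (σ i) := hx (Finset.mem_Iic.mp hj)
      have h2 : p (π (σ j)) ≤ x (σ j) := hπ _
      have h3 : p (π (σ j)) < p i := lt_of_le_of_lt (h2.trans h1) hlt
      have : π (σ j) < i := by
        by_contra hge
        push_neg at hge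
        exact absurd (hmono hge) (not_le.mpr h3)
      exact Finset.mem_Iio.mpr this
    have hcard : ((Finset.Iic i).image σ).card = (i : ℕ) + 1 := by
      rw [Finset.card_image_of_injective _ σ.injective, Fin.card_Iic]
    have hle : (((Finset.Iic i).image σ).image π).card ≤ (Finset.Iio i).card :=
      Finset.card_le_card (fun m hm => by
        obtain ⟨m', hm', rfl⟩ := Finset.mem_image.mp hm
        exact key m' hm')
    rw [Finset.card_image_of_injective _ π.injective, hcard, Fin.card_Iio] at hle
    omega
  · intro h
    refine ⟨(Tuple.sort x)⁻¹, fun i => ?_⟩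
    have := h ((Tuple.sort x)⁻¹ i)
    simpa [sortedNth] using this


/-- For `1 ≤ p_1 ≤ … ≤ p_d ≤ n`, `Q(n−p_1,…,n−p_d,1,…,1) = q_n(p_1,…,p_d)`. -/
theorem QQ_eq_qn (n d : ℕ) (p : Fin d → ℕ) (hmono : Monotone p)
    (hp1 : ∀ i, 1 ≤ p i) (hpn : ∀ i, p i ≤ n) :
    QQ d (fun i => n - p i) (fun _ => 1) = qn n d p := by
  classical
  unfold QQ qn
  set a := Finset.univ.sup (fun i => n - p i) with ha
  have ha' : ∀ i, n - p i ≤ a := fun i =>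
    Finset.le_sup (f := fun i => n - p i) (Finset.mem_univ i)
  have fiber : ∀ (x : Fin d → ℕ) (i : Fin d),
      ((Finset.univ.image fun j => (j, n + 1 - x j)).filter fun u => u.1 = i)
        = {(i, n + 1 - x i)} := by
    intro x i
    ext ⟨j, y⟩
    simp only [Finset.mem_filter, Finset.mem_image, Finset.mem_univ, true_and,
      Finset.mem_singleton, Prod.mk.injEq]
    constructor
    · rintro ⟨⟨k, rfl, rfl⟩, rfl⟩
      exact ⟨rfl, rfl⟩
    · rintro ⟨rfl, rfl⟩
      exact ⟨⟨j, rfl, rfl⟩, rfl⟩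
  refine (Finset.card_bij (fun x _ => Finset.univ.image fun j => (j, n + 1 - x j))
    ?_ ?_ ?_).symm
  · -- maps into target
    intro x hx
    rw [Finset.mem_filter] at hx
    obtain ⟨hx1, hx2⟩ := hx
    have hxmem : ∀ i, 1 ≤ x i ∧ x i ≤ n := by
      intro i
      have := Fintype.mem_piFinset.mp hx1 i
      exact Finset.mem_Icc.mp this
    -- get the permutation from the sorted condition
    obtain ⟨π, hπ⟩ := (perm_iff' p x hmono).mpr hx2
    rw [Finset.mem_filter]
    constructor
    · rw [Finset.mem_powerset]
      intro u hu
      obtain ⟨j, _, rfl⟩ := Finset.mem_image.mp hu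
      apply Finset.mem_biUnion.mpr
      refine ⟨j, Finset.mem_univ _, Finset.mem_image.mpr ⟨n + 1 - x j, ?_, rfl⟩⟩
      rw [Finset.mem_Icc]
      show 1 ≤ n + 1 - x j ∧ n + 1 - x j ≤ a + 1
      have h1 := (hxmem j).1
      have h2 := (hxmem j).2
      -- use the inverse sort permutation: p ((sort x)⁻¹ j) ≤ x j
      have h3 : p ((Tuple.sort x)⁻¹ j) ≤ x j := by
        have := hx2 ((Tuple.sort x)⁻¹ j)
        simpa [sortedNth] using this
      have h4 := ha' ((Tuple.sort x)⁻¹ j)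
      have h5 := hpn ((Tuple.sort x)⁻¹ j)
      omega
    · refine ⟨π, fun i => ?_⟩
      rw [fiber]
      constructor
      · intro y hy
        simp only [Finset.image_singleton, Finset.mem_singleton] at hy
        subst hy
        rw [Finset.mem_Icc]
        show 1 ≤ n + 1 - x i ∧ n + 1 - x i ≤ n - p (π i) + 1
        have h1 := (hxmem i).1
        have h2 := (hxmem i).2
        have h3 := hπ i
        have h5 := hpn (π i)
        omega
      · simp
  · -- injective
    intro x hx y hy hxy
    funext i
    have hxy' : (Finset.univ.image fun j => (j, n + 1 - x j))
        = Finset.univ.image fun j => (j, n + 1 - y j) := hxy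
    have : (i, n + 1 - x i) ∈ Finset.univ.image fun j => (j, n + 1 - y j) := by
      rw [← hxy']; exact Finset.mem_image.mpr ⟨i, Finset.mem_univ _, rfl⟩
    obtain ⟨j, _, hj⟩ := Finset.mem_image.mp this
    obtain ⟨rfl, heq⟩ := Prod.mk.injEq .. ▸ hj
    rw [Finset.mem_filter] at hx hy
    have h1 := Finset.mem_Icc.mp (Fintype.mem_piFinset.mp hx.1 j)
    have h2 := Finset.mem_Icc.mp (Fintype.mem_piFinset.mp hy.1 j)
    omega
  · -- surjective
    intro S hS
    rw [Finset.mem_filter, Finset.mem_powerset] at hS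
    obtain ⟨hSsub, π, hπ⟩ := hS
    have hsing : ∀ i, ∃ u, (S.filter fun u => u.1 = i) = {u} := fun i =>
      Finset.card_eq_one.mp (hπ i).2
    choose u hu using hsing
    have hufst : ∀ i, (u i).1 = i := by
      intro i
      have : u i ∈ S.filter fun v => v.1 = i := (hu i) ▸ Finset.mem_singleton_self _
      exact (Finset.mem_filter.mp this).2
    have huS : ∀ i, u i ∈ S := by
      intro i
      have : u i ∈ S.filter fun v => v.1 = i := (hu i) ▸ Finset.mem_singleton_self _
      exact (Finset.mem_filter.mp this).1
    have husnd : ∀ i, 1 ≤ (u i).2 ∧ (u i).2 ≤ n - p (π i) + 1 := by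
      intro i
      have h1 := (hπ i).1
      rw [hu i, Finset.image_singleton] at h1
      have := h1 (Finset.mem_singleton_self _)
      exact Finset.mem_Icc.mp this
    refine ⟨fun i => n + 1 - (u i).2, ?_, ?_⟩
    · rw [Finset.mem_filter]
      constructor
      · apply Fintype.mem_piFinset.mpr
        intro i
        rw [Finset.mem_Icc]
        have h1 := husnd i
        have h2 := hpn (π i)
        have h3 := hp1 (π i)
        omega
      · apply (perm_iff' p _ hmono).mp
        refine ⟨π, fun i => ?_⟩
        have h1 := husnd i
        have h2 := hpn (π i)
        omega
    · -- S = image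
      ext ⟨j, y⟩
      rw [Finset.mem_image]
      constructor
      · rintro ⟨i, -, hi⟩
        have h1 := husnd i
        have h3 : n + 1 - (n + 1 - (u i).2) = (u i).2 := by omega
        have hi' : (i, (u i).2) = (j, y) := by
          rw [← h3]; exact hi
        have h4 : (j, y) = u i := by
          rw [← hi']; exact Prod.ext_iff.mpr ⟨(hufst i).symm, rfl⟩
        rw [h4]; exact huS i
      · intro hjy
        refine ⟨j, Finset.mem_univ _, ?_⟩
        have hmem : (j, y) ∈ S.filter fun v => v.1 = j :=
          Finset.mem_filter.mpr ⟨hjy, rfl⟩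
        rw [hu j] at hmem
        have heq := (Finset.mem_singleton.mp hmem).symm
        have h1 := husnd j
        have h3 : n + 1 - (n + 1 - (u j).2) = (u j).2 := by omega
        have hy2 : (u j).2 = y := congrArg Prod.snd heq
        show (j, n + 1 - (n + 1 - (u j).2)) = (j, y)
        rw [h3, hy2]
end

section
/- Let X_1,...,X_d be disjoint finite sets and a_1,...,a_d, b_1,...,b_d nonnegative integers. Suppose A_1,...,A_h and B_1,...,B_h are families of subsets of X_1 ∪ ... ∪ X_d such that: (1) A_i ∩ B_i = ∅ for all i; (2) A_i ∩ B_j ≠ ∅ for all i < j; (3) |B_i ∩ X_j| ≤ b_j for all i, j; (4) for each i there is a permutation π of [d] with |A_i ∩ X_j| ≤ a_{π(j)} for all j. Then h ≤ Q(a_1,...,a_d,b_1,...,b_d). -/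
/-!
Label the elements of each `X_j` injectively by naturals. For the pair `(i, j)` let `φ_ij` be the
alternating form on `b_j`-tuples `v` of vectors of `ℚ^(a + b_j)` given by the determinant of the
Vandermonde rows of the labels of `A_i ∩ X_j` stacked on the first `|A_i ∩ X_j| + b_j`
coordinates of `v`, and let `w_kj` be the Vandermonde rows of the labels of `B_k ∩ X_j`, padded
by fresh points to exactly `b_j` rows. Then `∏_j φ_ij (w_kj)` is a product of Vandermonde
determinants: it vanishes for `i < k`, where an element of `A_i ∩ B_k` is a repeated point,
and not for `i = k`, where all points are distinct. So this `h × h` matrix is invertible.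

Expanding every `φ_ij` in the basis of the exterior power factors the matrix through the
coordinates indexed by tuples `(s_j)` of `b_j`-subsets. Since `φ_ij` kills `e_(s_j)` unless `s_j`
lies in the first `|A_i ∩ X_j| + b_j ≤ a_(π_i j) + b_j` coordinates, only tuples admissible for
some permutation contribute, and these inject into the sets counted by `Q`.
-/

open Finset exteriorPower Set.powersetCard

theorem Fin.append_update_right {α : Type*} {m b : ℕ} [DecidableEq (Fin b)] (u : Fin m → α)
    (v : Fin b → α) (c : Fin b) (x : α) :
    Fin.append u (Function.update v c x) =
      Function.update (Fin.append u v) (Fin.natAdd m c) x := by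
  ext r
  refine Fin.addCases (fun r => ?_) (fun r => ?_) r
  · rw [Function.update_of_ne (Fin.ext_iff.not.2 (by simp; omega))]
    simp
  · by_cases h : r = c
    · subst h
      simp
    · simp [h, Function.update_of_ne]

/-- The generalized Laplace expansion, read off from the basis of `⋀[R]^n M` induced by `b`. -/
theorem AlternatingMap.apply_eq_sum_det_coord_smul {R M N I : Type*} [CommRing R]
    [AddCommGroup M] [Module R M] [AddCommGroup N] [Module R N] [LinearOrder I] [Fintype I]
    {n : ℕ} (b : Module.Basis I R M) (f : M [⋀^Fin n]→ₗ[R] N) (v : Fin n → M) :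
    f v = ∑ s : Set.powersetCard I n,
      (Matrix.of fun i j => b.coord (ofFinEmbEquiv.symm s j) (v i)).det •
        f (b ∘ ofFinEmbEquiv.symm s) := by
  rw [← alternatingMapLinearEquiv_apply_ιMulti, ← (b.exteriorPower n).sum_repr (ιMulti R n v),
    map_sum]
  simp [basis_repr_apply, ιMulti_family]

namespace Matrix

variable {R : Type*} [CommRing R] {m b n : ℕ}

def detAppendRows (u : Fin m → Fin (m + b) → R) : (Fin (m + b) → R) [⋀^Fin b]→ₗ[R] R where
  toFun v := (of (Fin.append u v)).det
  map_update_add' v c x y := by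
    simp only [Fin.append_update_right]
    exact det_updateRow_add _ _ _ _
  map_update_smul' v c s x := by
    simp only [Fin.append_update_right]
    exact det_updateRow_smul _ _ _ _
  map_eq_zero_of_eq' v c c' hv hcc :=
    det_zero_of_row_eq (i := Fin.natAdd m c) (j := Fin.natAdd m c') (by simpa using hcc)
      (show Fin.append u v _ = Fin.append u v _ by simp only [Fin.append_right, hv])

def vandermondeTruncDet (p : Fin m → R) (h : m + b ≤ n) : (Fin n → R) [⋀^Fin b]→ₗ[R] R :=
  (detAppendRows fun r (t : Fin (m + b)) => p r ^ (t : ℕ)).compLinearMap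
    (LinearMap.funLeft R R (Fin.castLE h))

theorem vandermondeTruncDet_pow (p : Fin m → R) (q : Fin b → R) (h : m + b ≤ n) :
    vandermondeTruncDet p h (fun c (t : Fin n) => q c ^ (t : ℕ)) =
      (vandermonde (Fin.append p q)).det := by
  show det _ = det _
  congr 1
  ext r t
  refine Fin.addCases (fun r => ?_) (fun r => ?_) r <;> simp

theorem vandermondeTruncDet_basisFun_eq_zero (p : Fin m → R) (h : m + b ≤ n)
    {s : Set.powersetCard (Fin n) b} {t : Fin n} (hts : t ∈ s) (ht : m + b ≤ t) :
    vandermondeTruncDet p h (Pi.basisFun R (Fin n) ∘ ofFinEmbEquiv.symm s) = 0 := by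
  obtain ⟨c, hc⟩ := (mem_range_ofFinEmbEquiv_symm_iff_mem s t).2 hts
  rw [vandermondeTruncDet, AlternatingMap.compLinearMap_apply]
  refine AlternatingMap.map_coord_zero _ c ?_
  ext t'
  have : Fin.castLE h t' ≠ t := Fin.ne_of_val_ne (by simp; omega)
  simp [hc, LinearMap.funLeft_apply, this]

theorem card_le_card_of_isLowerTriangular_mul {K κ ι : Type*} [Field K] [Fintype κ]
    [LinearOrder κ] [Fintype ι] (C : Matrix κ ι K) (Y : Matrix ι κ K) (S : Finset ι)
    (hS : ∀ i f, C i f ≠ 0 → f ∈ S) (hlow : (C * Y).IsLowerTriangular)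
    (hdiag : ∀ i, (C * Y) i i ≠ 0) : Fintype.card κ ≤ S.card := by
  classical
  have hfactor : C * Y = (of fun i (f : S) => C i f) * of fun (f : S) k => Y f k := by
    ext i k
    simp only [mul_apply, of_apply]
    rw [Finset.sum_coe_sort S (fun f => C i f * Y f k)]
    refine (Finset.sum_subset (subset_univ S) fun f _ hf => ?_).symm
    rw [not_imp_comm.1 (hS i f) hf, zero_mul]
  have hunit : IsUnit (C * Y) := by
    rw [isUnit_iff_isUnit_det, det_of_isLowerTriangular _ hlow]
    exact (prod_ne_zero_iff.2 fun i _ => hdiag i).isUnit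
  calc Fintype.card κ = (C * Y).rank := (rank_of_isUnit _ hunit).symm
    _ ≤ S.card := by
      rw [hfactor, ← Fintype.card_coe S]
      exact (rank_mul_le_left _ _).trans (rank_le_card_width _)

end Matrix

theorem card_le_of_prod_alternatingMap {K κ ι : Type*} [Field K] [Fintype κ] [LinearOrder κ]
    [Fintype ι] [DecidableEq ι] {I M : ι → Type*} [∀ j, LinearOrder (I j)] [∀ j, Fintype (I j)]
    [∀ j, AddCommGroup (M j)] [∀ j, Module K (M j)] {n : ι → ℕ}
    (e : ∀ j, Module.Basis (I j) K (M j)) (φ : κ → ∀ j, M j [⋀^Fin (n j)]→ₗ[K] K)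
    (w : κ → ∀ j, Fin (n j) → M j) (S : Finset (∀ j, Set.powersetCard (I j) (n j)))
    (hS : ∀ i f, ∏ j, φ i j (e j ∘ ofFinEmbEquiv.symm (f j)) ≠ 0 → f ∈ S)
    (hlow : ∀ i k, i < k → ∏ j, φ i j (w k j) = 0) (hdiag : ∀ i, ∏ j, φ i j (w i j) ≠ 0) :
    Fintype.card κ ≤ S.card := by
  let C : Matrix κ (∀ j, Set.powersetCard (I j) (n j)) K :=
    .of fun i f => ∏ j, φ i j (e j ∘ ofFinEmbEquiv.symm (f j))
  let Y : Matrix (∀ j, Set.powersetCard (I j) (n j)) κ K := .of fun f k =>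
    ∏ j, (Matrix.of fun a c => (e j).coord (ofFinEmbEquiv.symm (f j) c) (w k j a)).det
  have hCY : ∀ i k, (C * Y) i k = ∏ j, φ i j (w k j) := by
    intro i k
    simp_rw [fun j => AlternatingMap.apply_eq_sum_det_coord_smul (e j) (φ i j) (w k j),
      Finset.prod_univ_sum, Fintype.piFinset_univ, Matrix.mul_apply, C, Y, Matrix.of_apply,
      ← Finset.prod_mul_distrib, smul_eq_mul, mul_comm]
  refine Matrix.card_le_card_of_isLowerTriangular_mul C Y S hS (fun i k hik => ?_)
    fun i => (hCY i i).symm ▸ hdiag i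
  rw [hCY]
  exact hlow i k hik

section LabelPoints

variable {α : Type*} (ℓ : α → ℕ)

/-- The padding values `-(c + 1)` are negative, hence never equal to a label. -/
noncomputable def labelPoints (S : Finset α) (n : ℕ) : Fin n → ℚ := fun c =>
  if hc : (c : ℕ) < S.card then (ℓ (S.equivFin.symm ⟨c, hc⟩) : ℚ) else -((c : ℚ) + 1)

variable {ℓ}

theorem exists_labelPoints_eq {S : Finset α} {n : ℕ} {x : α} (hx : x ∈ S) (hn : S.card ≤ n) :
    ∃ c, labelPoints ℓ S n c = ℓ x := by
  refine ⟨⟨S.equivFin ⟨x, hx⟩, by omega⟩, ?_⟩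
  simp [labelPoints]

private theorem natCast_ne_neg_add_one (m k : ℕ) : (m : ℚ) ≠ -((k : ℚ) + 1) := by
  intro h
  linarith [h ▸ m.cast_nonneg (α := ℚ), k.cast_nonneg (α := ℚ)]

theorem labelPoints_injective {S : Finset α} (hℓ : Set.InjOn ℓ S) (n : ℕ) :
    Function.Injective (labelPoints ℓ S n) := by
  intro c c' h
  unfold labelPoints at h
  split_ifs at h with hc hc' hc'
  · have := S.equivFin.symm.injective
      (Subtype.ext (hℓ (coe_mem _) (coe_mem _) (by exact_mod_cast h)))
    exact Fin.ext (by simpa using this)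
  · exact absurd h (natCast_ne_neg_add_one _ _)
  · exact absurd h.symm (natCast_ne_neg_add_one _ _)
  · exact Fin.ext (by simpa using h)

theorem injective_append_labelPoints {S T : Finset α} (hℓ : Set.InjOn ℓ (↑S ∪ ↑T))
    (hST : Disjoint S T) (n : ℕ) :
    Function.Injective (Fin.append (labelPoints ℓ S S.card) (labelPoints ℓ T n)) := by
  refine Fin.append_injective_iff.2 ⟨labelPoints_injective (hℓ.mono (by simp)) _,
    labelPoints_injective (hℓ.mono (by simp)) _, fun r c h => ?_⟩
  simp only [labelPoints, r.isLt, dif_pos] at h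
  split_ifs at h with hc
  · have hxy := hℓ (.inl (coe_mem _)) (.inr (coe_mem _)) (by exact_mod_cast h)
    exact disjoint_left.1 hST (hxy ▸ coe_mem _) (coe_mem _)
  · exact natCast_ne_neg_add_one _ _ h

theorem not_injective_append_labelPoints {S T : Finset α} {n : ℕ} {x : α} (hxS : x ∈ S)
    (hxT : x ∈ T) (hT : T.card ≤ n) :
    ¬Function.Injective (Fin.append (labelPoints ℓ S S.card) (labelPoints ℓ T n)) := by
  intro hinj
  obtain ⟨r, hr⟩ := exists_labelPoints_eq (ℓ := ℓ) hxS le_rfl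
  obtain ⟨c, hc⟩ := exists_labelPoints_eq (ℓ := ℓ) hxT hT
  exact (Fin.append_injective_iff.1 hinj).2.2 r c (hr.trans hc.symm)

theorem vandermondeTruncDet_labelPoints_ne_zero {S T : Finset α} {b n : ℕ}
    (h : S.card + b ≤ n) (hℓ : Set.InjOn ℓ (↑S ∪ ↑T)) (hST : Disjoint S T) :
    Matrix.vandermondeTruncDet (labelPoints ℓ S S.card) h
      (fun c (t : Fin n) => labelPoints ℓ T b c ^ (t : ℕ)) ≠ 0 := by
  rw [Matrix.vandermondeTruncDet_pow, Matrix.det_vandermonde_ne_zero_iff]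
  exact injective_append_labelPoints hℓ hST b

theorem vandermondeTruncDet_labelPoints_eq_zero {S T : Finset α} {b n : ℕ} {x : α}
    (h : S.card + b ≤ n) (hxS : x ∈ S) (hxT : x ∈ T) (hT : T.card ≤ b) :
    Matrix.vandermondeTruncDet (labelPoints ℓ S S.card) h
      (fun c (t : Fin n) => labelPoints ℓ T b c ^ (t : ℕ)) = 0 := by
  rw [Matrix.vandermondeTruncDet_pow, ← not_ne_iff, Matrix.det_vandermonde_ne_zero_iff]
  exact not_injective_append_labelPoints hxS hxT hT

end LabelPoints

/-- Coordinates are `0`-indexed here, whereas `QQ` uses `[1, a + b_j]`. -/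
def admissibleTuples (d : ℕ) (a b : Fin d → ℕ) :
    Finset (∀ j, Set.powersetCard (Fin (univ.sup a + b j)) (b j)) :=
  univ.filter fun f => ∃ τ : Equiv.Perm (Fin d), ∀ j, ∀ t ∈ f j, (t : ℕ) < a (τ j) + b j

theorem card_admissibleTuples_le_QQ (d : ℕ) (a b : Fin d → ℕ) :
    (admissibleTuples d a b).card ≤ QQ d a b := by
  let shift (j : Fin d) : Fin (univ.sup a + b j) ↪ Fin d × ℕ :=
    (Fin.valEmbedding.trans (addRightEmbedding 1)).trans (.sectR j ℕ)
  have hshift : ∀ j t, shift j t = (j, (t : ℕ) + 1) := fun _ _ => rfl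
  let F (f : ∀ j, Set.powersetCard (Fin (univ.sup a + b j)) (b j)) : Finset (Fin d × ℕ) :=
    univ.biUnion fun j => (f j : Finset _).map (shift j)
  have hF : ∀ f j, (F f).filter (fun u => u.1 = j) = (f j : Finset _).map (shift j) := by
    intro f j
    ext ⟨j', x⟩
    simp only [F, hshift, mem_filter, mem_biUnion, mem_univ, true_and, mem_map, Prod.mk.injEq]
    constructor
    · rintro ⟨⟨_, t, ht, rfl, rfl⟩, rfl⟩
      exact ⟨t, ht, rfl, rfl⟩
    · rintro ⟨t, ht, rfl, rfl⟩
      exact ⟨⟨j, t, ht, rfl, rfl⟩, rfl⟩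
  refine card_le_card_of_injOn F (fun f hf => ?_) fun f _ g _ hfg => ?_
  · obtain ⟨τ, hτ⟩ := (mem_filter.1 hf).2
    refine mem_filter.2 ⟨mem_powerset.2 fun u hu => ?_, τ, fun j => ⟨?_, ?_⟩⟩
    · obtain ⟨j, t, -, rfl⟩ : ∃ j, ∃ t ∈ (f j : Finset _), shift j t = u := by
        simpa [F] using hu
      simp only [hshift, mem_biUnion, mem_univ, true_and, mem_image, mem_Icc]
      exact ⟨j, t + 1, ⟨by omega, by omega⟩, rfl⟩
    · intro x hx
      simp only [hF, mem_image, mem_map] at hx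
      obtain ⟨_, ⟨t, ht, rfl⟩, rfl⟩ := hx
      have := hτ j t ht
      simp only [hshift, mem_Icc]
      omega
    · rw [hF, card_map]
      exact (f j).2
  · funext j
    exact Subtype.ext (map_injective (shift j) (by rw [← hF, ← hF, hfg]))

theorem two_families_general {α : Type*} [DecidableEq α] (d h : ℕ)
    (X : Fin d → Finset α)
    (a b : Fin d → ℕ) (A B : Fin h → Finset α)
    (hA : ∀ i, A i ⊆ Finset.univ.biUnion X)
    (h1 : ∀ i, A i ∩ B i = ∅)
    (h2 : ∀ i j, i < j → (A i ∩ B j).Nonempty)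
    (h3 : ∀ i j, (B i ∩ X j).card ≤ b j)
    (h4 : ∀ i, ∃ π : Equiv.Perm (Fin d), ∀ j, (A i ∩ X j).card ≤ a (π j)) :
    h ≤ QQ d a b := by
  choose π hπ using h4
  choose ℓ hℓ using fun j => Set.countable_iff_exists_injOn.1 (X j).countable_toSet
  have hm : ∀ i j, (A i ∩ X j).card + b j ≤ univ.sup a + b j := fun i j =>
    Nat.add_le_add_right ((hπ i j).trans (le_sup (mem_univ _))) _
  rw [← Fintype.card_fin h]
  refine (card_le_of_prod_alternatingMap (fun j => Pi.basisFun ℚ _)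
    (fun i j => Matrix.vandermondeTruncDet (labelPoints (ℓ j) (A i ∩ X j) _) (hm i j))
    (fun k j c t => labelPoints (ℓ j) (B k ∩ X j) (b j) c ^ (t : ℕ)) _
    (fun i f hf => ?_) (fun i k hik => ?_) fun i => ?_).trans (card_admissibleTuples_le_QQ d a b)
  · refine mem_filter.2 ⟨mem_univ _, π i, fun j t ht => ?_⟩
    by_contra! hle
    exact prod_ne_zero_iff.1 hf j (mem_univ _)
      (Matrix.vandermondeTruncDet_basisFun_eq_zero _ _ ht (by have := hπ i j; omega))
  · obtain ⟨x, hx⟩ := h2 i k hik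
    obtain ⟨hxA, hxB⟩ := mem_inter.1 hx
    obtain ⟨j, -, hxj⟩ := mem_biUnion.1 (hA i hxA)
    exact prod_eq_zero (mem_univ j) (vandermondeTruncDet_labelPoints_eq_zero _
      (mem_inter.2 ⟨hxA, hxj⟩) (mem_inter.2 ⟨hxB, hxj⟩) (h3 k j))
  · exact prod_ne_zero_iff.2 fun j _ => vandermondeTruncDet_labelPoints_ne_zero _
      ((hℓ j).mono (by simp))
      ((disjoint_iff_inter_eq_empty.2 (h1 i)).mono inter_subset_left inter_subset_left)

/-- The undirected two-families theorem: if `A_1,…,A_h` and `B_1,…,B_h` are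
families of subsets of `X_1 ∪ … ∪ X_d` (with the `X_j` pairwise disjoint)
such that `A_i ∩ B_i = ∅`, `A_i ∩ B_j ≠ ∅` for `i < j`, `|B_i ∩ X_j| ≤ b_j`,
and for each `i` some permutation `π` has `|A_i ∩ X_j| ≤ a_{π(j)}` for all
`j`, then `h ≤ Q(a_1,…,a_d,b_1,…,b_d)`. -/
theorem two_families {α : Type*} [DecidableEq α] (d h : ℕ)
    (X : Fin d → Finset α) (hX : ∀ i j, i ≠ j → Disjoint (X i) (X j))
    (a b : Fin d → ℕ) (A B : Fin h → Finset α)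
    (hA : ∀ i, A i ⊆ Finset.univ.biUnion X)
    (hB : ∀ i, B i ⊆ Finset.univ.biUnion X)
    (h1 : ∀ i, A i ∩ B i = ∅)
    (h2 : ∀ i j, i < j → (A i ∩ B j).Nonempty)
    (h3 : ∀ i j, (B i ∩ X j).card ≤ b j)
    (h4 : ∀ i, ∃ π : Equiv.Perm (Fin d), ∀ j, (A i ∩ X j).card ≤ a (π j)) :
    h ≤ QQ d a b :=
  two_families_general d h X a b A B hA h1 h2 h3 h4
end

section
/- The bound in the undirected two-families theorem is tight: for any nonnegative integers a_1,...,a_d, b_1,...,b_d, there exist disjoint sets X_1,...,X_d and families A_1,...,A_h and B_1,...,B_h of subsets of X_1 ∪ ... ∪ X_d with h = Q(a_1,...,a_d,b_1,...,b_d), satisfying: A_i ∩ B_i = ∅ for all i; A_i ∩ B_j ≠ ∅ for all i < j; |B_i ∩ X_j| ≤ b_j for all i,j; and for each i there is a permutation π of [d] with |A_i ∩ X_j| ≤ a_{π(j)} for all j. -/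
/-!
Let `𝒮` be the family counted by `Q`, and for `S ∈ 𝒮` with permutation `π` let
`T_S = ⋃_k {k} × [a_{π k} + b_k]`. List `𝒮` as `S_1, …, S_h` by non-increasing weight
`w(S) = ∑_{(k, x) ∈ S} x`, and take `B_i = S_i`, `A_i = T_{S_i} \ S_i`, `X_k` the `k`-th column.
If `A_i ∩ B_j = ∅`, then in every column `k` the points of `S_j` of height at most
`a_{π k} + b_k` all lie in `S_i`; as both sets have `b_k` points in that column, the points of
`S_j \ S_i` lie strictly above those of `S_i \ S_j`, so `w(S_i) < w(S_j)` unless `S_i = S_j`.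
This contradicts the ordering when `i < j`.
-/

open Finset

section Exchange

variable {α ι : Type*} [DecidableEq α]

theorem sum_lt_sum_of_card_eq_of_le_imp_mem {s t : Finset α} {v : α → ℕ} {m : ℕ}
    (hs : ∀ x ∈ s, v x ≤ m) (hcard : #s = #t) (ht : ∀ x ∈ t, v x ≤ m → x ∈ s)
    (hne : s ≠ t) : ∑ x ∈ s, v x < ∑ x ∈ t, v x := by
  rw [← sum_sdiff_lt_sum_sdiff]
  have hnonempty : (t \ s).Nonempty := by
    rw [sdiff_nonempty]
    exact fun hts => hne (eq_of_subset_of_card_le hts hcard.le).symm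
  calc ∑ x ∈ s \ t, v x ≤ #(s \ t) • m :=
        sum_le_card_nsmul _ _ _ fun x hx => hs x (mem_sdiff.1 hx).1
    _ = #(t \ s) • m := by rw [card_sdiff_comm hcard]
    _ < #(t \ s) • (m + 1) := by simp [hnonempty.card_pos]
    _ ≤ ∑ x ∈ t \ s, v x := card_nsmul_le_sum _ _ _ fun x hx => by
        rw [mem_sdiff] at hx
        by_contra! h
        exact hx.2 (ht x hx.1 (by omega))

variable [Fintype ι] [DecidableEq ι]

theorem sum_lt_sum_of_fiber_card_eq {s t : Finset α} {p : α → ι} {v : α → ℕ}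
    {m : ι → ℕ} (hs : ∀ x ∈ s, v x ≤ m (p x))
    (hcard : ∀ k, #{x ∈ s | p x = k} = #{x ∈ t | p x = k})
    (ht : ∀ x ∈ t, v x ≤ m (p x) → x ∈ s) (hne : s ≠ t) :
    ∑ x ∈ s, v x < ∑ x ∈ t, v x := by
  have fiber_lt : ∀ k, {x ∈ s | p x = k} ≠ {x ∈ t | p x = k} →
      ∑ x ∈ s with p x = k, v x < ∑ x ∈ t with p x = k, v x := fun k hk =>
    sum_lt_sum_of_card_eq_of_le_imp_mem (m := m k)
      (fun x hx => (mem_filter.1 hx).2 ▸ hs x (mem_filter.1 hx).1) (hcard k)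
      (fun x hx hle => mem_filter.2
        ⟨ht x (mem_filter.1 hx).1 ((mem_filter.1 hx).2 ▸ hle), (mem_filter.1 hx).2⟩) hk
  obtain ⟨k, hk⟩ : ∃ k, {x ∈ s | p x = k} ≠ {x ∈ t | p x = k} := by
    by_contra! h
    refine hne (ext fun x => ?_)
    simpa using congrArg (x ∈ ·) (h (p x))
  rw [← sum_fiberwise s p, ← sum_fiberwise t p]
  refine sum_lt_sum (fun k _ => ?_) ⟨k, mem_univ k, fiber_lt k hk⟩
  by_cases h : {x ∈ s | p x = k} = {x ∈ t | p x = k}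
  · rw [h]
  · exact (fiber_lt k h).le

end Exchange

section Box

variable {ι : Type*} [DecidableEq ι]

def column (k : ι) (n : ℕ) : Finset (ι × ℕ) :=
  (Icc 1 n).image fun x => (k, x)

def columns [Fintype ι] (m : ι → ℕ) : Finset (ι × ℕ) :=
  univ.biUnion fun k => column k (m k)

theorem mem_column {k : ι} {n : ℕ} {u : ι × ℕ} :
    u ∈ column k n ↔ u.1 = k ∧ u.2 ∈ Icc 1 n := by
  obtain ⟨i, x⟩ := u
  simp only [column, mem_image, Prod.mk.injEq]
  constructor
  · rintro ⟨y, hy, rfl, rfl⟩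
    exact ⟨rfl, hy⟩
  · rintro ⟨rfl, hx⟩
    exact ⟨x, hx, rfl, rfl⟩

theorem card_column (k : ι) (n : ℕ) : #(column k n) = n := by
  rw [column, card_image_of_injective _ fun x y h => (Prod.ext_iff.1 h).2, Nat.card_Icc,
    Nat.add_sub_cancel]

theorem disjoint_column {i j : ι} (h : i ≠ j) (n n' : ℕ) :
    Disjoint (column i n) (column j n') :=
  disjoint_left.2 fun _ hi hj => h ((mem_column.1 hi).1.symm.trans (mem_column.1 hj).1)

theorem inter_column_subset_filter (s : Finset (ι × ℕ)) (k : ι) (n : ℕ) :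
    s ∩ column k n ⊆ {u ∈ s | u.1 = k} := fun _ hu =>
  mem_filter.2 ⟨(mem_inter.1 hu).1, (mem_column.1 (mem_inter.1 hu).2).1⟩

variable [Fintype ι] {m m' : ι → ℕ}

theorem mem_columns {u : ι × ℕ} : u ∈ columns m ↔ u.2 ∈ Icc 1 (m u.1) := by
  simp [columns, mem_column]

theorem columns_mono (h : m ≤ m') : columns m ⊆ columns m' := fun u hu => by
  rw [mem_columns, mem_Icc] at hu ⊢
  exact ⟨hu.1, hu.2.trans (h u.1)⟩

theorem filter_fst_columns (k : ι) : {u ∈ columns m | u.1 = k} = column k (m k) := by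
  ext u
  rw [mem_filter, mem_columns, mem_column]
  constructor
  · rintro ⟨hu, rfl⟩
    exact ⟨rfl, hu⟩
  · rintro ⟨rfl, hu⟩
    exact ⟨hu, rfl⟩

theorem subset_columns_iff {s : Finset (ι × ℕ)} :
    s ⊆ columns m ↔ ∀ k, {u ∈ s | u.1 = k}.image Prod.snd ⊆ Icc 1 (m k) := by
  constructor
  · intro h k x hx
    obtain ⟨u, hu, rfl⟩ := mem_image.1 hx
    obtain ⟨hus, rfl⟩ := mem_filter.1 hu
    exact mem_columns.1 (h hus)
  · intro h u hu
    exact mem_columns.2 (h u.1 (mem_image_of_mem _ (mem_filter.2 ⟨hu, rfl⟩)))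

theorem card_sdiff_inter_column_le {s : Finset (ι × ℕ)} (hs : s ⊆ columns m) (k : ι)
    (n : ℕ) :
    #((columns m \ s) ∩ column k n) ≤ m k - #{u ∈ s | u.1 = k} := by
  have hfiber : {u ∈ s | u.1 = k} ⊆ column k (m k) :=
    filter_fst_columns (m := m) k ▸ filter_subset_filter _ hs
  calc #((columns m \ s) ∩ column k n) ≤ #(column k (m k) \ {u ∈ s | u.1 = k}) := by
        refine card_le_card fun u hu => ?_
        obtain ⟨hcol, hs'⟩ := mem_sdiff.1 (mem_inter.1 hu).1
        have hk := (mem_column.1 (mem_inter.1 hu).2).1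
        rw [mem_sdiff, ← filter_fst_columns, mem_filter, mem_filter]
        exact ⟨⟨hcol, hk⟩, fun h => hs' h.1⟩
    _ = m k - #{u ∈ s | u.1 = k} := by rw [card_sdiff_of_subset hfiber, card_column]

theorem sum_snd_lt_of_disjoint_sdiff_columns {s t : Finset (ι × ℕ)} (hs : s ⊆ columns m)
    (ht : t ⊆ columns m') (hcard : ∀ k, #{u ∈ s | u.1 = k} = #{u ∈ t | u.1 = k})
    (hdisj : Disjoint (columns m \ s) t) (hne : s ≠ t) : ∑ u ∈ s, u.2 < ∑ u ∈ t, u.2 := by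
  refine sum_lt_sum_of_fiber_card_eq (m := m)
    (fun u hu => (mem_Icc.1 (mem_columns.1 (hs hu))).2) hcard (fun u hu hle => ?_) hne
  by_contra hus
  have hcol : u ∈ columns m :=
    mem_columns.2 (mem_Icc.2 ⟨(mem_Icc.1 (mem_columns.1 (ht hu))).1, hle⟩)
  exact disjoint_left.1 hdisj (mem_sdiff.2 ⟨hcol, hus⟩) hu

end Box

theorem exists_equiv_antitone {α β : Type*} [LinearOrder β] (s : Finset α) (f : α → β) :
    ∃ e : Fin #s ≃ s, Antitone fun i => f (e i) := by
  let g : Fin #s → βᵒᵈ := fun i => OrderDual.toDual (f (s.equivFin.symm i))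
  exact ⟨(Tuple.sort g).trans s.equivFin.symm, fun _ _ hij => Tuple.monotone_sort g hij⟩

def IsTwoFamilies {α ι κ : Type*} [DecidableEq α] [Fintype ι] [LT κ] (a b : ι → ℕ)
    (X : ι → Finset α) (A B : κ → Finset α) : Prop :=
  (∀ i j, i ≠ j → Disjoint (X i) (X j)) ∧
  (∀ i, A i ⊆ univ.biUnion X) ∧
  (∀ i, B i ⊆ univ.biUnion X) ∧
  (∀ i, A i ∩ B i = ∅) ∧
  (∀ i j, i < j → (A i ∩ B j).Nonempty) ∧
  (∀ i j, #(B i ∩ X j) ≤ b j) ∧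
  (∀ i, ∃ π : Equiv.Perm ι, ∀ j, #(A i ∩ X j) ≤ a (π j))

theorem IsTwoFamilies.map {α β ι κ : Type*} [DecidableEq α] [DecidableEq β] [Fintype ι]
    [LT κ]
    {a b : ι → ℕ} {X : ι → Finset α} {A B : κ → Finset α} (h : IsTwoFamilies a b X A B)
    (e : α ↪ β) :
    IsTwoFamilies a b (fun j => (X j).map e) (fun i => (A i).map e) (fun i => (B i).map e) := by
  obtain ⟨hX, hA, hB, hAB, hcross, hBcard, hAcard⟩ := h
  have map_subset :
      ∀ {s}, s ⊆ univ.biUnion X → s.map e ⊆ univ.biUnion fun j => (X j).map e :=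
    fun hs => by simpa [map_eq_image, ← biUnion_image] using image_subset_image hs
  refine ⟨fun i j hij => (disjoint_map e).2 (hX i j hij), fun i => map_subset (hA i),
    fun i => map_subset (hB i), fun i => ?_, fun i j hij => ?_, fun i j => ?_, fun i => ?_⟩
  · rw [← map_inter, hAB i, map_empty]
  · rw [← map_inter, map_nonempty]
    exact hcross i j hij
  · rw [← map_inter, card_map]
    exact hBcard i j
  · obtain ⟨π, hπ⟩ := hAcard i
    exact ⟨π, fun j => by rw [← map_inter, card_map]; exact hπ j⟩

def admissible (d : ℕ) (a b : Fin d → ℕ) : Finset (Finset (Fin d × ℕ)) :=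
  (columns fun i => univ.sup a + b i).powerset.filter fun S => ∃ π : Equiv.Perm (Fin d), ∀ i,
    ({u ∈ S | u.1 = i}.image Prod.snd ⊆ Icc 1 (a (π i) + b i)) ∧ #{u ∈ S | u.1 = i} = b i

theorem columns_perm_subset_columns_sup {d : ℕ} (a b : Fin d → ℕ) (π : Equiv.Perm (Fin d)) :
    columns (fun k => a (π k) + b k) ⊆ columns fun k => univ.sup a + b k :=
  columns_mono fun k => Nat.add_le_add_right (le_sup (mem_univ (π k))) _

theorem QQ_eq_card_admissible (d : ℕ) (a b : Fin d → ℕ) : QQ d a b = #(admissible d a b) :=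
  rfl

theorem mem_admissible {d : ℕ} {a b : Fin d → ℕ} {S : Finset (Fin d × ℕ)} :
    S ∈ admissible d a b ↔ ∃ π : Equiv.Perm (Fin d),
      S ⊆ columns (fun k => a (π k) + b k) ∧ ∀ k, #{u ∈ S | u.1 = k} = b k := by
  rw [admissible, mem_filter, mem_powerset]
  constructor
  · rintro ⟨-, π, h⟩
    exact ⟨π, subset_columns_iff.2 fun k => (h k).1, fun k => (h k).2⟩
  · rintro ⟨π, hsub, hcard⟩
    exact ⟨hsub.trans (columns_perm_subset_columns_sup a b π), π,
      fun k => ⟨subset_columns_iff.1 hsub k, hcard k⟩⟩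

theorem exists_isTwoFamilies (d : ℕ) (a b : Fin d → ℕ) :
    ∃ (X : Fin d → Finset (Fin d × ℕ)) (A B : Fin (QQ d a b) → Finset (Fin d × ℕ)),
      IsTwoFamilies a b X A B := by
  rw [QQ_eq_card_admissible]
  obtain ⟨S, hS⟩ := exists_equiv_antitone (admissible d a b) fun S => ∑ u ∈ S, u.2
  choose π hπ using fun i => mem_admissible.1 (S i).2
  refine ⟨fun k => column k (univ.sup a + b k),
    fun i => columns (fun k => a (π i k) + b k) \ S i, fun i => S i,
    fun i j hij => disjoint_column hij _ _,
    fun i => sdiff_subset.trans (columns_perm_subset_columns_sup a b (π i)),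
    fun i => (hπ i).1.trans (columns_perm_subset_columns_sup a b (π i)),
    fun i => sdiff_inter_self _ _, fun i j hij => ?_, fun i j => ?_,
    fun i => ⟨π i, fun j => ?_⟩⟩
  · rw [← not_disjoint_iff_nonempty_inter]
    intro hdisj
    have hne : (S i : Finset (Fin d × ℕ)) ≠ S j :=
      fun h => hij.ne (S.injective (Subtype.ext h))
    refine absurd (hS hij.le) (not_le.2 ?_)
    exact sum_snd_lt_of_disjoint_sdiff_columns (hπ i).1 (hπ j).1
      (fun k => ((hπ i).2 k).trans ((hπ j).2 k).symm) hdisj hne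
  · exact (card_le_card (inter_column_subset_filter _ _ _)).trans ((hπ i).2 j).le
  · have := card_sdiff_inter_column_le (hπ i).1 j (univ.sup a + b j)
    rwa [(hπ i).2 j, Nat.add_sub_cancel] at this

/-- Tightness of the undirected two-families theorem: there exist pairwise
disjoint sets `X_1,…,X_d` and families `A_1,…,A_h`, `B_1,…,B_h` of subsets
of `X_1 ∪ … ∪ X_d` with `h = Q(a_1,…,a_d,b_1,…,b_d)` satisfying all four
conditions. -/
theorem two_families_tight (d : ℕ) (a b : Fin d → ℕ) :
    ∃ (X : Fin d → Finset ℕ) (A B : Fin (QQ d a b) → Finset ℕ),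
      (∀ i j, i ≠ j → Disjoint (X i) (X j)) ∧
      (∀ i, A i ⊆ Finset.univ.biUnion X) ∧
      (∀ i, B i ⊆ Finset.univ.biUnion X) ∧
      (∀ i, A i ∩ B i = ∅) ∧
      (∀ i j, i < j → (A i ∩ B j).Nonempty) ∧
      (∀ i j, (B i ∩ X j).card ≤ b j) ∧
      (∀ i, ∃ π : Equiv.Perm (Fin d), ∀ j, (A i ∩ X j).card ≤ a (π j)) := by
  obtain ⟨_, _, _, h⟩ := exists_isTwoFamilies d a b
  exact ⟨_, _, _, h.map (Encodable.encode' _)⟩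
end

section
/- Let 1 ≤ p ≤ q ≤ n. The bipartite graph G on vertex classes X = {x_1,...,x_n} and Y = {y_1,...,y_n} with edge set {x_i y_j : i < p} ∪ {x_i y_j : j < p} ∪ {x_i y_j : p ≤ i, j < q} is weakly K_{p,q}-saturated, and it has exactly n^2 − (n−p+1)^2 + (q−p)^2 edges. -/
/-!
Write `a = p - 1`, `b = q - 1` and index rows and columns from `0`. A non-edge `x_i y_j` with
`j ≥ b` completes the `K_{p,q}` on rows `{0,…,a-1,i}` and columns `{0,…,b-1,j}`; a non-edge with
`j < b` has `i ≥ b` and completes the `K_{q,p}` on rows `{0,…,b-1,i}` and columns `{0,…,a-1,j}`.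
All other edges of these copies lie in the graph, except that for `i, j ≥ b` the first copy uses
non-edges of the second kind, so those are added first. The graph is the complement of the
square on the last `n - a` rows and columns, plus the square `[a, b)²`, whence the edge count.
-/

/-- `S`, `T` span a copy of `K_{p,q}`, with the side of size `p` in either
class. -/
def IsKpq (p q : ℕ) {n : ℕ} (S T : Finset (Fin n)) : Prop :=
  (S.card = p ∧ T.card = q) ∨ (S.card = q ∧ T.card = p)

/-- An `n × n` bipartite graph, given by its edge set
`E ⊆ X × Y = Fin n × Fin n`, is weakly `K_{p,q}`-saturated if its non-edges
can be ordered as a list `l` so that adding them one at a time, each newly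
added edge lies in a copy of `K_{p,q}` (in either orientation) all of whose
edges are already present. -/
def WeakSatBip (n p q : ℕ) (E : Finset (Fin n × Fin n)) : Prop :=
  ∃ l : List (Fin n × Fin n), l.Nodup ∧ (∀ e, e ∈ l ↔ e ∉ E) ∧
    ∀ k : Fin l.length, ∃ S T : Finset (Fin n),
      IsKpq p q S T ∧ l.get k ∈ S ×ˢ T ∧
      (S ×ˢ T : Finset (Fin n × Fin n)) ⊆ E ∪ (l.take (k + 1)).toFinset

open Finset

lemma List.mem_take_succ_of_lt_rank {α : Type*} (r : α → ℕ) {l : List α}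
    (hl : l.Pairwise (r · ≤ r ·)) {k : ℕ} (hk : k < l.length) {f : α} (hf : f ∈ l)
    (hrf : r f < r l[k]) : f ∈ l.take (k + 1) := by
  obtain ⟨j, hj, rfl⟩ := List.getElem_of_mem hf
  have hjk : j ≤ k := by
    by_contra! hkj
    exact (List.pairwise_iff_getElem.mp hl k j hk hj hkj).not_gt hrf
  exact List.mem_take_iff_getElem.mpr ⟨j, by omega, rfl⟩

theorem weakSatBip_of_rank {n p q : ℕ} (E : Finset (Fin n × Fin n)) (r : Fin n × Fin n → ℕ)
    (h : ∀ e ∉ E, ∃ S T : Finset (Fin n), IsKpq p q S T ∧ e ∈ S ×ˢ T ∧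
      ∀ f ∈ S ×ˢ T, f ∈ E ∨ f = e ∨ r f < r e) :
    WeakSatBip n p q E := by
  set l := (univ.filter (· ∉ E)).toList.mergeSort fun e f => decide (r e ≤ r f)
  have hsorted : l.Pairwise (r · ≤ r ·) := by
    simpa using List.pairwise_mergeSort (le := fun e f => decide (r e ≤ r f))
      (fun _ _ _ h₁ h₂ => by simp only [decide_eq_true_eq] at *; omega)
      (fun _ _ => by simp only [Bool.or_eq_true, decide_eq_true_eq]; omega) _
  have hmem : ∀ e, e ∈ l ↔ e ∉ E := by simp [l]
  refine ⟨l, List.nodup_mergeSort.mpr (nodup_toList _), hmem, fun k => ?_⟩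
  obtain ⟨S, T, hST, he, hsub⟩ := h (l.get k) ((hmem _).mp (List.get_mem l k))
  refine ⟨S, T, hST, he, fun f hf => ?_⟩
  rw [mem_union, List.mem_toFinset]
  by_cases hfE : f ∈ E
  · exact .inl hfE
  rcases (hsub f hf).resolve_left hfE with rfl | hlt
  · exact .inr (List.mem_take_iff_getElem.mpr ⟨k, by simp, rfl⟩)
  · exact .inr (List.mem_take_succ_of_lt_rank r hsorted k.isLt ((hmem f).mpr hfE) hlt)

def initialSegment (n m : ℕ) : Finset (Fin n) := {i | i.val < m}

lemma card_initialSegment (n m : ℕ) : #(initialSegment n m) = min n m :=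
  Fin.card_filter_val_lt

lemma card_insert_initialSegment {n m : ℕ} {i : Fin n} (hi : m ≤ i.val) :
    #(insert i (initialSegment n m)) = m + 1 := by
  rw [card_insert_of_notMem (by simp [initialSegment]; omega), card_initialSegment]
  omega

/-- For `a = p - 1`, `b = q - 1` this is the graph of the theorem, in 0-indexed labels. -/
def cornerGraph (n a b : ℕ) : Finset (Fin n × Fin n) :=
  {e | e.1.val < a ∨ e.2.val < a ∨ (a ≤ e.1.val ∧ e.1.val < b ∧ a ≤ e.2.val ∧ e.2.val < b)}

lemma mem_cornerGraph {n a b : ℕ} {e : Fin n × Fin n} : e ∈ cornerGraph n a b ↔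
    e.1.val < a ∨ e.2.val < a ∨ (a ≤ e.1.val ∧ e.1.val < b ∧ a ≤ e.2.val ∧ e.2.val < b) := by
  simp [cornerGraph]

theorem weakSatBip_cornerGraph (n a b : ℕ) : WeakSatBip n (a + 1) (b + 1) (cornerGraph n a b) := by
  refine weakSatBip_of_rank _ (fun e => if b ≤ e.1.val ∧ b ≤ e.2.val then 1 else 0) ?_
  rintro ⟨i, j⟩ he
  simp only [mem_cornerGraph] at he
  by_cases hj : b ≤ j.val
  · refine ⟨insert i (initialSegment n a), insert j (initialSegment n b),
      .inl ⟨card_insert_initialSegment (by omega), card_insert_initialSegment hj⟩,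
      by simp, ?_⟩
    rintro ⟨i', j'⟩ hf
    simp only [mem_product, mem_insert, initialSegment, mem_filter, mem_univ, true_and] at hf
    simp only [mem_cornerGraph, Prod.mk.injEq]
    split_ifs <;> omega
  · refine ⟨insert i (initialSegment n b), insert j (initialSegment n a),
      .inr ⟨card_insert_initialSegment (by omega), card_insert_initialSegment (by omega)⟩,
      by simp, ?_⟩
    rintro ⟨i', j'⟩ hf
    simp only [mem_product, mem_insert, initialSegment, mem_filter, mem_univ, true_and] at hf
    simp only [mem_cornerGraph, Prod.mk.injEq]
    omega

theorem card_cornerGraph {n a b : ℕ} (hb : b ≤ n) :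
    #(cornerGraph n a b) = n ^ 2 - (n - a) ^ 2 + (b - a) ^ 2 := by
  set R := univ \ initialSegment n a
  set M := initialSegment n b \ initialSegment n a
  have hE : cornerGraph n a b = (univ \ R ×ˢ R) ∪ M ×ˢ M := by
    ext e
    simp only [R, M, mem_cornerGraph, initialSegment, mem_union, mem_sdiff, mem_product,
      mem_filter, mem_univ, true_and]
    omega
  have hMR : M ⊆ R := sdiff_subset_sdiff (subset_univ _) subset_rfl
  have hdisj : Disjoint (univ \ R ×ˢ R) (M ×ˢ M) :=
    disjoint_sdiff_self_left.mono_right (product_subset_product hMR hMR)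
  have hR : #R = n - a := by
    rw [card_sdiff_of_subset (subset_univ _), card_univ, Fintype.card_fin, card_initialSegment]
    omega
  have hM : #M = b - a := by
    have hI : initialSegment n a ∩ initialSegment n b = initialSegment n (min a b) := by
      ext i
      simp only [initialSegment, mem_inter, mem_filter, mem_univ, true_and]
      omega
    rw [card_sdiff, hI, card_initialSegment, card_initialSegment]
    omega
  rw [hE, card_union_of_disjoint hdisj, card_sdiff_of_subset (subset_univ _), card_univ,
    Fintype.card_prod, Fintype.card_fin, card_product, card_product, hR, hM, sq, sq, sq]

/-- The graph with edges `{x_i y_j : i < p} ∪ {x_i y_j : j < p} ∪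
{x_i y_j : p ≤ i, j < q}` (1-indexed labels) is weakly `K_{p,q}`-saturated
and has exactly `n² − (n−p+1)² + (q−p)²` edges. -/
theorem construction_bip (n p q : ℕ) (hp : 1 ≤ p) (hpq : p ≤ q) (hqn : q ≤ n) :
    WeakSatBip n p q
      (Finset.univ.filter fun e : Fin n × Fin n =>
        e.1.val + 1 < p ∨ e.2.val + 1 < p ∨
          (p ≤ e.1.val + 1 ∧ e.1.val + 1 < q ∧ p ≤ e.2.val + 1 ∧ e.2.val + 1 < q)) ∧
    (Finset.univ.filter fun e : Fin n × Fin n =>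
        e.1.val + 1 < p ∨ e.2.val + 1 < p ∨
          (p ≤ e.1.val + 1 ∧ e.1.val + 1 < q ∧ p ≤ e.2.val + 1 ∧ e.2.val + 1 < q)).card =
      n ^ 2 - (n - p + 1) ^ 2 + (q - p) ^ 2 := by
  obtain ⟨a, rfl⟩ : ∃ a, p = a + 1 := ⟨p - 1, by omega⟩
  obtain ⟨b, rfl⟩ : ∃ b, q = b + 1 := ⟨q - 1, by omega⟩
  have hE : (Finset.univ.filter fun e : Fin n × Fin n =>
        e.1.val + 1 < a + 1 ∨ e.2.val + 1 < a + 1 ∨ (a + 1 ≤ e.1.val + 1 ∧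
          e.1.val + 1 < b + 1 ∧ a + 1 ≤ e.2.val + 1 ∧ e.2.val + 1 < b + 1)) =
      cornerGraph n a b := by
    ext e
    simp only [mem_filter, mem_univ, true_and, mem_cornerGraph]
    omega
  rw [hE, card_cornerGraph (by omega), show n - (a + 1) + 1 = n - a by omega,
    show b + 1 - (a + 1) = b - a by omega]
  exact ⟨weakSatBip_cornerGraph n a b, rfl⟩
end

section
/- Let 1 ≤ p_1 ≤ ... ≤ p_d ≤ n and let G_0 be the d-uniform d-partite hypergraph with vertex classes V_1,...,V_d each labeled by [n], containing exactly those edges (x_1,...,x_d) ∈ [n]^d for which x_{(i)} < p_i for some i. Then G_0 is weakly K^d_{p_1,...,p_d}-saturated. Consequently W_n(p_1,...,p_d) ≤ n^d − q_n(p_1,...,p_d). -/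
/-- The labels (in `{1,…,n}`) of the vertices of the edge `v`. -/
def edgeLabels {n d : ℕ} (v : Fin d → Fin n) : Fin d → ℕ := fun i => (v i).val + 1

/-- The classes `S_1,…,S_d` span a copy of `K^d_{p_1,…,p_d}` in some
orientation: for some permutation `π`, `|S_i| = p_{π(i)}`. -/
def IsBox {n d : ℕ} (p : Fin d → ℕ) (S : Fin d → Finset (Fin n)) : Prop :=
  ∃ π : Equiv.Perm (Fin d), ∀ i, (S i).card = p (π i)

/-- A `d`-uniform `d`-partite hypergraph with `n` vertices per class, given
by its edge set `E ⊆ V_1 × ⋯ × V_d`, is weakly `K^d_{p_1,…,p_d}`-saturated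
if its non-edges can be ordered as a list `l` so that each newly added edge
lies in a copy of `K^d_{p_1,…,p_d}` (in any orientation) all of whose edges
are already present. -/
def WeakSatHyp (n d : ℕ) (p : Fin d → ℕ) (E : Finset (Fin d → Fin n)) : Prop :=
  ∃ l : List (Fin d → Fin n), l.Nodup ∧ (∀ e, e ∈ l ↔ e ∉ E) ∧
    ∀ k : Fin l.length, ∃ S : Fin d → Finset (Fin n),
      IsBox p S ∧ l.get k ∈ Fintype.piFinset S ∧
      Fintype.piFinset S ⊆ E ∪ (l.take (k + 1)).toFinset

/-- The hypergraph `G_0` whose edges are the tuples `x ∈ [n]^d` with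
`x_{(i)} < p_i` for some `i`. -/
def G0 (n d : ℕ) (p : Fin d → ℕ) : Finset (Fin d → Fin n) :=
  Finset.univ.filter fun v => ∃ i, sortedNth (edgeLabels v) i < p i

/-- `W_n(p_1,…,p_d)`: the minimum number of edges of a weakly
`K^d_{p_1,…,p_d}`-saturated `d`-uniform `d`-partite hypergraph with `n`
vertices per class. -/
noncomputable def WHyp (n d : ℕ) (p : Fin d → ℕ) : ℕ :=
  sInf {m | ∃ E : Finset (Fin d → Fin n), WeakSatHyp n d p E ∧ E.card = m}

theorem List.Pairwise.mem_take_of_lt {α : Type*} {f : α → ℕ} {l : List α}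
    (hl : l.Pairwise fun a b => f a ≤ f b) {b : α} (hb : b ∈ l) (k : Fin l.length)
    (hlt : f b < f (l.get k)) : b ∈ l.take k := by
  obtain ⟨j, rfl⟩ := List.mem_iff_get.1 hb
  have hjk : j < k := by
    by_contra! hkj
    rcases hkj.eq_or_lt with rfl | hkj
    · exact hlt.false
    · exact (hlt.trans_le (hl.rel_get_of_lt hkj)).false
  exact List.mem_take_iff_getElem.2 ⟨j, lt_min hjk j.isLt, rfl⟩

theorem List.get_mem_take_succ {α : Type*} (l : List α) (k : Fin l.length) :
    l.get k ∈ l.take (k + 1) :=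
  List.mem_take_iff_getElem.2 ⟨k, lt_min (Nat.lt_add_one k) k.isLt, rfl⟩

theorem Finset.exists_list_linearExtension {α : Type*} [Preorder α] (s : Finset α) :
    ∃ l : List α, l.Nodup ∧ (∀ a, a ∈ l ↔ a ∈ s) ∧
      ∀ k : Fin l.length, ∀ b ∈ l, b < l.get k → b ∈ l.take k := by
  classical
  let rank : α → ℕ := fun a => (s.filter (· < a)).card
  have rank_lt {a b : α} (ha : a ∈ s) (hab : a < b) : rank a < rank b := by
    refine Finset.card_lt_card ⟨fun c hc => ?_, fun hsub => ?_⟩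
    · rw [Finset.mem_filter] at hc ⊢
      exact ⟨hc.1, hc.2.trans hab⟩
    · exact lt_irrefl a (Finset.mem_filter.1 (hsub (Finset.mem_filter.2 ⟨ha, hab⟩))).2
  let l := s.toList.insertionSort fun a b => rank a ≤ rank b
  have hperm : l.Perm s.toList := List.perm_insertionSort _ _
  have hsorted : l.Pairwise fun a b => rank a ≤ rank b := List.pairwise_insertionSort _ _
  have hmem (a : α) : a ∈ l ↔ a ∈ s := by rw [hperm.mem_iff, Finset.mem_toList]
  refine ⟨l, hperm.nodup_iff.2 s.nodup_toList, hmem, fun k b hb hlt => ?_⟩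
  exact hsorted.mem_take_of_lt hb k (rank_lt ((hmem b).1 hb) hlt)

section

variable {n d : ℕ}

theorem weakSatHyp_of_forall_box_le (p : Fin d → ℕ) (E : Finset (Fin d → Fin n))
    (hbox : ∀ x ∉ E, ∃ S : Fin d → Finset (Fin n),
      IsBox p S ∧ x ∈ Fintype.piFinset S ∧ ∀ y ∈ Fintype.piFinset S, y ≤ x) :
    WeakSatHyp n d p E := by
  classical
  obtain ⟨l, hnodup, hmem, hbelow⟩ := Eᶜ.exists_list_linearExtension
  have hmem' (e : Fin d → Fin n) : e ∈ l ↔ e ∉ E := (hmem e).trans Finset.mem_compl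
  refine ⟨l, hnodup, hmem', fun k => ?_⟩
  obtain ⟨S, hS, hkS, hle⟩ := hbox (l.get k) ((hmem' _).1 (l.get_mem k))
  refine ⟨S, hS, hkS, fun y hy => ?_⟩
  rw [Finset.mem_union, List.mem_toFinset]
  by_cases hyE : y ∈ E
  · exact .inl hyE
  rcases (hle y hy).eq_or_lt with rfl | hlt
  · exact .inr (l.get_mem_take_succ k)
  · exact .inr (List.take_subset_take_left l k.val.le_succ (hbelow k y ((hmem' y).2 hyE) hlt))

theorem exists_finset_card_eq_of_le {x : Fin n} {c : ℕ} (hc1 : 1 ≤ c) (hcx : c ≤ x + 1) :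
    ∃ S : Finset (Fin n), S.card = c ∧ x ∈ S ∧ ∀ y ∈ S, y ≤ x := by
  obtain ⟨S, hxS, hSx, hcard⟩ :=
    Finset.exists_subsuperset_card_eq (s := {x}) (t := Finset.Iic x) (n := c)
      (Finset.singleton_subset_iff.2 (Finset.mem_Iic.2 le_rfl))
      (by rwa [Finset.card_singleton]) (by rwa [Fin.card_Iic])
  exact ⟨S, hcard, Finset.singleton_subset_iff.1 hxS, fun y hy => Finset.mem_Iic.1 (hSx hy)⟩

theorem exists_box_le {x : Fin d → Fin n} {c : Fin d → ℕ} (hc1 : ∀ j, 1 ≤ c j)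
    (hcx : ∀ j, c j ≤ x j + 1) :
    ∃ S : Fin d → Finset (Fin n), (∀ j, (S j).card = c j) ∧
      x ∈ Fintype.piFinset S ∧ ∀ y ∈ Fintype.piFinset S, y ≤ x := by
  choose S hcard hxS hle using fun j => exists_finset_card_eq_of_le (hc1 j) (hcx j)
  exact ⟨S, hcard, Fintype.mem_piFinset.2 hxS,
    fun y hy j => hle j (y j) (Fintype.mem_piFinset.1 hy j)⟩

theorem sortedNth_sort_symm {x : Fin d → ℕ} (j : Fin d) :
    sortedNth x ((Tuple.sort x).symm j) = x j := by
  simp [sortedNth]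

theorem notMem_G0 {p : Fin d → ℕ} {v : Fin d → Fin n} :
    v ∉ G0 n d p ↔ ∀ i, p i ≤ sortedNth (edgeLabels v) i := by
  simp [G0]

theorem exists_box_le_of_notMem_G0 {p : Fin d → ℕ} (hp1 : ∀ i, 1 ≤ p i)
    {x : Fin d → Fin n} (hx : x ∉ G0 n d p) :
    ∃ S : Fin d → Finset (Fin n),
      IsBox p S ∧ x ∈ Fintype.piFinset S ∧ ∀ y ∈ Fintype.piFinset S, y ≤ x := by
  set σ := Tuple.sort (edgeLabels x)
  have hcx (j : Fin d) : p (σ.symm j) ≤ x j + 1 := by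
    have hj := notMem_G0.1 hx (σ.symm j)
    rwa [sortedNth_sort_symm] at hj
  obtain ⟨S, hcard, hxS, hle⟩ := exists_box_le (fun j => hp1 (σ.symm j)) hcx
  exact ⟨S, ⟨σ.symm, hcard⟩, hxS, hle⟩

theorem edgeLabels_injective :
    Function.Injective (edgeLabels : (Fin d → Fin n) → Fin d → ℕ) :=
  fun _ _ h => funext fun i => Fin.ext (Nat.succ_injective (congrFun h i))

theorem tuples_eq_image_edgeLabels :
    tuples n d = (Finset.univ : Finset (Fin d → Fin n)).image edgeLabels := by
  ext x
  simp only [tuples, Fintype.mem_piFinset, Finset.mem_Icc, Finset.mem_image, Finset.mem_univ,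
    true_and]
  constructor
  · intro hx
    refine ⟨fun i => ⟨x i - 1, by have := hx i; omega⟩, funext fun i => ?_⟩
    have := hx i
    simp only [edgeLabels]
    omega
  · rintro ⟨v, rfl⟩ i
    exact ⟨Nat.succ_pos _, (v i).isLt⟩

theorem card_compl_G0 (p : Fin d → ℕ) : (G0 n d p)ᶜ.card = qn n d p := by
  rw [qn, tuples_eq_image_edgeLabels, Finset.filter_image,
    Finset.card_image_of_injective _ edgeLabels_injective]
  congr 1
  ext v
  rw [Finset.mem_compl, notMem_G0, Finset.mem_filter]
  simp

theorem card_G0 (p : Fin d → ℕ) : (G0 n d p).card = n ^ d - qn n d p := by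
  have := Finset.card_compl_add_card (G0 n d p)
  rw [card_compl_G0, Fintype.card_pi, Finset.prod_const, Finset.card_univ, Fintype.card_fin,
    Fintype.card_fin] at this
  omega

end

theorem G0_weakly_saturated_general (n d : ℕ) (p : Fin d → ℕ) (hp1 : ∀ i, 1 ≤ p i) :
    WeakSatHyp n d p (G0 n d p) ∧ WHyp n d p ≤ n ^ d - qn n d p := by
  have hsat : WeakSatHyp n d p (G0 n d p) :=
    weakSatHyp_of_forall_box_le p _ fun x hx => exists_box_le_of_notMem_G0 hp1 hx
  refine ⟨hsat, ?_⟩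
  calc WHyp n d p ≤ (G0 n d p).card := Nat.sInf_le ⟨_, hsat, rfl⟩
    _ = n ^ d - qn n d p := card_G0 p

/-- `G_0` is weakly `K^d_{p_1,…,p_d}`-saturated; consequently
`W_n(p_1,…,p_d) ≤ n^d − q_n(p_1,…,p_d)`. -/
theorem G0_weakly_saturated (n d : ℕ) (p : Fin d → ℕ) (hmono : Monotone p)
    (hp1 : ∀ i, 1 ≤ p i) (hpn : ∀ i, p i ≤ n) :
    WeakSatHyp n d p (G0 n d p) ∧ WHyp n d p ≤ n ^ d - qn n d p :=
  G0_weakly_saturated_general n d p hp1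
end

section
/- For all integers 1 ≤ p_1 ≤ ... ≤ p_d ≤ n, every weakly K^d_{p_1,...,p_d}-saturated d-uniform d-partite hypergraph with n vertices per class has at least n^d − q_n(p_1,...,p_d) edges; combining with the matching construction, W_n(p_1,...,p_d) = n^d − q_n(p_1,...,p_d). -/
/-!
Lower bound, by the linear-algebra method: a coefficient vector `c`, indexed by exponent tuples
in `{0,…,n-1}^d`, defines the polynomial `∑ₖ cₖ xᵏ`, whose values on the grid are
`gridMatrix *ᵥ c`. Suppose `c` vanishes on `qSet` and its polynomial vanishes on `E`. If `x` is
added inside a box `S₁ × ⋯ × S_d`, weight each grid point `f` of the box by `∏ᵢ wᵢ(fᵢ)`, with `wᵢ`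
the Lagrange nodal weights of `Sᵢ`; these kill `a ↦ aᵐ` for `m + 1 < |Sᵢ|`. The weighted sum of
the polynomial over the box factorises as `∑ₖ cₖ ∏ᵢ ∑_{a ∈ Sᵢ} wᵢ(a) a^{kᵢ} = 0`, because every
exponent tuple outside `qSet` has some `kᵢ + 1 < |Sᵢ|`. So the polynomial also vanishes at `x`,
hence on the whole grid, and `c = 0` by the Combinatorial Nullstellensatz. Therefore
`c ↦ (values on E, c restricted to qSet)` is injective and `n^d ≤ |E| + q_n`.

Upper bound: the complement of `qSet` is weakly saturated. Add the tuples of `qSet` in order of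
increasing coordinate sum; `x` lies in the box `∏ᵢ [xᵢ + 1 - p_{π i}, xᵢ]`, whose other points have
smaller coordinate sum.
-/

open Finset Matrix

theorem forall_le_sortedNth_iff_s15 {d : ℕ} {p : Fin d → ℕ} (hp : Monotone p) (y : Fin d → ℕ) :
    (∀ i, p i ≤ sortedNth y i) ↔ ∃ π : Equiv.Perm (Fin d), ∀ i, p (π i) ≤ y i := by
  unfold sortedNth
  have hσ := Tuple.monotone_sort y
  generalize Tuple.sort y = σ at hσ ⊢
  refine ⟨fun h => ⟨σ⁻¹, fun i => by simpa using h (σ⁻¹ i)⟩, ?_⟩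
  rintro ⟨π, hπ⟩ i
  by_contra! hlt
  -- otherwise the `i + 1` smallest entries of `y` give `i + 1` distinct indices `π (σ j) < i`
  have hmaps : Set.MapsTo (fun j => π (σ j)) (Iic i : Finset _) (Iio i : Finset _) := by
    intro j hj
    simp only [coe_Iic, coe_Iio, Set.mem_Iic, Set.mem_Iio] at hj ⊢
    by_contra! hij
    have := hπ (σ j)
    have := hσ hj
    have := hp hij
    simp only [Function.comp_apply] at *
    omega
  have := card_le_card_of_injOn _ hmaps fun a _ b _ hab => σ.injective (π.injective hab)
  simp at this

/-- Tuples are `0`-based here: `x ∈ qSet n d p` iff `x + 1` is counted by `qn n d p`. -/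
def qSet (n d : ℕ) (p : Fin d → ℕ) : Finset (Fin d → Fin n) :=
  {x | ∃ π : Equiv.Perm (Fin d), ∀ i, p (π i) ≤ x i + 1}

theorem card_qSet {n d : ℕ} {p : Fin d → ℕ} (hp : Monotone p) : #(qSet n d p) = qn n d p := by
  refine card_bij (fun x _ j => (x j : ℕ) + 1) (fun x hx => ?_) (fun x _ y _ hxy => ?_)
    fun y hy => ?_
  · simp only [qSet, mem_filter, mem_univ, true_and] at hx
    simp only [tuples, mem_filter, Fintype.mem_piFinset, mem_Icc, forall_le_sortedNth_iff_s15 hp]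
    exact ⟨fun j => ⟨by omega, (x j).isLt⟩, hx⟩
  · exact funext fun j => Fin.ext (by simpa using congr_fun hxy j)
  · simp only [tuples, mem_filter, Fintype.mem_piFinset, mem_Icc, forall_le_sortedNth_iff_s15 hp] at hy
    refine ⟨fun j => ⟨y j - 1, by have := hy.1 j; omega⟩, ?_, funext fun j => ?_⟩
    · obtain ⟨π, hπ⟩ := hy.2
      simp only [qSet, mem_filter, mem_univ, true_and]
      exact ⟨π, fun i => by have := hy.1 i; have := hπ i; omega⟩
    · have := hy.1 j; simp only; omega

theorem Lagrange.sum_nodalWeight_mul_pow_eq_zero {F ι : Type*} [Field F] [DecidableEq ι]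
    {s : Finset ι} {v : ι → F} (hvs : Set.InjOn v s) {m : ℕ} (hm : m + 1 < #s) :
    ∑ i ∈ s, nodalWeight s v i * v i ^ m = 0 := by
  have h := coeff_eq_sum hvs (P := Polynomial.X ^ m)
    (by rw [Polynomial.degree_X_pow]; exact_mod_cast (by omega : m < #s))
  rw [Polynomial.coeff_X_pow, if_neg (by omega)] at h
  simp only [Polynomial.eval_pow, Polynomial.eval_X, div_eq_mul_inv, ← prod_inv_distrib] at h
  simp only [nodalWeight, mul_comm, h]

theorem Fin.natCast_val_injective {K : Type*} [AddMonoidWithOne K] [CharZero K] {n : ℕ} :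
    Function.Injective fun a : Fin n => ((a : ℕ) : K) :=
  fun _ _ hab => Fin.ext (Nat.cast_injective hab)

def gridMatrix (K : Type*) [CommRing K] (n d : ℕ) : Matrix (Fin d → Fin n) (Fin d → Fin n) K :=
  Matrix.of fun x k => ∏ i, ((x i : ℕ) : K) ^ (k i : ℕ)

open MvPolynomial in
theorem eq_zero_of_gridMatrix_mulVec_eq_zero {K : Type*} [CommRing K] [IsDomain K] [CharZero K]
    {n d : ℕ} {c : (Fin d → Fin n) → K} (h : gridMatrix K n d *ᵥ c = 0) : c = 0 := by
  classical
  let exponent : (Fin d → Fin n) → Fin d →₀ ℕ :=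
    fun k => Finsupp.equivFunOnFinite.symm fun i => k i
  have exponent_inj : Function.Injective exponent := fun k k' hk => funext fun i =>
    Fin.ext (by simpa [exponent] using DFunLike.congr_fun hk i)
  let P : MvPolynomial (Fin d) K := ∑ k, monomial (exponent k) (c k)
  ext k
  have hP : P = 0 := by
    refine eq_zero_of_eval_zero_at_prod_finset P
      (fun _ => univ.image fun a : Fin n => ((a : ℕ) : K)) (fun i => ?_) fun x hx => ?_
    · rw [card_image_of_injective _ Fin.natCast_val_injective, card_fin,
        degreeOf_lt_iff (k i).pos]
      intro m hm
      obtain ⟨k', -, hk'⟩ := mem_biUnion.1 (support_sum hm)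
      rw [Finset.mem_singleton.1 (support_monomial_subset hk')]
      exact (k' i).isLt
    · choose y hy using fun i => by simpa using hx i
      have := congr_fun h y
      simp only [Matrix.mulVec, dotProduct, gridMatrix, Matrix.of_apply, Pi.zero_apply] at this
      rw [← funext hy, ← this, map_sum]
      refine sum_congr rfl fun k' _ => ?_
      simp [eval_monomial, exponent, Finsupp.prod_fintype, mul_comm]
  have := congr_arg (coeff (exponent k)) hP
  rwa [coeff_sum, sum_eq_single k (fun k' _ hk' => by
      rw [coeff_monomial, if_neg (exponent_inj.ne hk')]) (by simp), coeff_monomial,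
    if_pos rfl] at this

section LowerBound

open Lagrange

variable {K : Type*} [Field K] {n d : ℕ} {p : Fin d → ℕ}

theorem sum_piFinset_nodalWeight_mul_gridMatrix_mulVec (S : Fin d → Finset (Fin n))
    (c : (Fin d → Fin n) → K) :
    ∑ f ∈ Fintype.piFinset S,
        (∏ i, nodalWeight (S i) (fun a : Fin n => ((a : ℕ) : K)) (f i)) *
          (gridMatrix K n d *ᵥ c) f =
      ∑ k, c k * ∏ i, ∑ a ∈ S i,
        nodalWeight (S i) (fun a : Fin n => ((a : ℕ) : K)) a * ((a : ℕ) : K) ^ (k i : ℕ) := by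
  simp only [mulVec, dotProduct, gridMatrix, of_apply, mul_sum, prod_univ_sum]
  rw [sum_comm]
  refine sum_congr rfl fun k _ => sum_congr rfl fun f _ => ?_
  rw [prod_mul_distrib]
  ring

theorem sum_piFinset_nodalWeight_mul_gridMatrix_mulVec_eq_zero [CharZero K]
    {S : Fin d → Finset (Fin n)} (hS : IsBox p S) {c : (Fin d → Fin n) → K}
    (hc : ∀ k ∈ qSet n d p, c k = 0) :
    ∑ f ∈ Fintype.piFinset S,
        (∏ i, nodalWeight (S i) (fun a : Fin n => ((a : ℕ) : K)) (f i)) *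
          (gridMatrix K n d *ᵥ c) f =
      0 := by
  rw [sum_piFinset_nodalWeight_mul_gridMatrix_mulVec]
  refine sum_eq_zero fun k _ => ?_
  by_cases hk : k ∈ qSet n d p
  · rw [hc k hk, zero_mul]
  obtain ⟨π, hπ⟩ := hS
  obtain ⟨i, hi⟩ : ∃ i, (k i : ℕ) + 1 < p (π i) := by
    by_contra! h
    exact hk (by simpa [qSet] using ⟨π, h⟩)
  rw [prod_eq_zero (mem_univ i)
    (sum_nodalWeight_mul_pow_eq_zero Fin.natCast_val_injective.injOn (by rwa [hπ i])), mul_zero]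

theorem gridMatrix_mulVec_eq_zero_of_isBox [CharZero K] {S : Fin d → Finset (Fin n)}
    (hS : IsBox p S) {c : (Fin d → Fin n) → K} (hc : ∀ k ∈ qSet n d p, c k = 0)
    {y : Fin d → Fin n} (hy : y ∈ Fintype.piFinset S)
    (hf : ∀ f ∈ Fintype.piFinset S, f ≠ y → (gridMatrix K n d *ᵥ c) f = 0) :
    (gridMatrix K n d *ᵥ c) y = 0 := by
  have h := sum_piFinset_nodalWeight_mul_gridMatrix_mulVec_eq_zero hS hc
  rw [sum_eq_single_of_mem y hy fun f hfS hne => by rw [hf f hfS hne, mul_zero]] at h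
  exact (mul_eq_zero.1 h).resolve_left (prod_ne_zero_iff.2 fun i _ =>
    nodalWeight_ne_zero Fin.natCast_val_injective.injOn (Fintype.mem_piFinset.1 hy i))

theorem gridMatrix_mulVec_eq_zero_of_weakSatHyp [CharZero K] {E : Finset (Fin d → Fin n)}
    (hE : WeakSatHyp n d p E) {c : (Fin d → Fin n) → K} (hcQ : ∀ k ∈ qSet n d p, c k = 0)
    (hcE : ∀ x ∈ E, (gridMatrix K n d *ᵥ c) x = 0) :
    gridMatrix K n d *ᵥ c = 0 := by
  obtain ⟨l, -, hl, hbox⟩ := hE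
  have hlist : ∀ k (hk : k < l.length), (gridMatrix K n d *ᵥ c) l[k] = 0 := by
    intro k
    induction k using Nat.strong_induction_on with
    | _ k ih =>
    intro hk
    obtain ⟨S, hS, hy, hsub⟩ := hbox ⟨k, hk⟩
    refine gridMatrix_mulVec_eq_zero_of_isBox hS hcQ hy fun f hf hne => ?_
    rcases mem_union.1 (hsub hf) with hfE | hft
    · exact hcE f hfE
    obtain ⟨j, hj, rfl⟩ := List.mem_take_iff_getElem.1 (List.mem_toFinset.1 hft)
    have hjk : j ≠ k := by rintro rfl; exact hne rfl
    exact ih j (by simp only [lt_min_iff] at hj; omega) _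
  funext x
  by_cases hx : x ∈ E
  · exact hcE x hx
  obtain ⟨k, hk, rfl⟩ := List.mem_iff_getElem.1 ((hl x).2 hx)
  exact hlist k hk

theorem sub_qn_le_card_of_weakSatHyp (hp : Monotone p) {E : Finset (Fin d → Fin n)}
    (hE : WeakSatHyp n d p E) :
    n ^ d - qn n d p ≤ #E := by
  let Φ : ((Fin d → Fin n) → ℚ) →ₗ[ℚ] (E → ℚ) × (qSet n d p → ℚ) :=
    (LinearMap.funLeft ℚ ℚ Subtype.val ∘ₗ (gridMatrix ℚ n d).mulVecLin).prod
      (LinearMap.funLeft ℚ ℚ Subtype.val)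
  have hΦ : Function.Injective Φ := by
    refine (injective_iff_map_eq_zero Φ).2 fun c hc => eq_zero_of_gridMatrix_mulVec_eq_zero ?_
    exact gridMatrix_mulVec_eq_zero_of_weakSatHyp hE
      (fun k hk => congr_fun (congr_arg Prod.snd hc) ⟨k, hk⟩)
      fun x hx => congr_fun (congr_arg Prod.fst hc) ⟨x, hx⟩
  have := LinearMap.finrank_le_finrank_of_injective hΦ
  simp only [Module.finrank_prod, Module.finrank_fintype_fun_eq_card, Fintype.card_fun,
    Fintype.card_fin, Fintype.card_coe, card_qSet hp] at this
  omega

end LowerBound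

theorem List.mem_take_succ_of_lt {α β : Type*} [Preorder β] {l : List α} (key : α → β)
    (hl : l.Pairwise fun a b => key a ≤ key b) {k : ℕ} (hk : k < l.length) {f : α} (hf : f ∈ l)
    (hlt : key f < key l[k]) : f ∈ l.take (k + 1) := by
  obtain ⟨j, hj, rfl⟩ := List.mem_iff_getElem.1 hf
  refine List.mem_take_iff_getElem.2 ⟨j, ?_, rfl⟩
  have : j ≤ k := by
    by_contra! hkj
    exact lt_irrefl _ (hlt.trans_le (List.pairwise_iff_getElem.1 hl k j hk hj hkj))
  omega

theorem weakSatHyp_of_forall_isBox {β : Type*} [LinearOrder β] {n d : ℕ} {p : Fin d → ℕ}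
    {E : Finset (Fin d → Fin n)} (key : (Fin d → Fin n) → β)
    (hbox : ∀ x ∉ E, ∃ S, IsBox p S ∧ x ∈ Fintype.piFinset S ∧
      ∀ f ∈ Fintype.piFinset S, f ∉ E → f ≠ x → key f < key x) :
    WeakSatHyp n d p E := by
  let l := (univ \ E).toList.mergeSort fun a b => key a ≤ key b
  have hperm : l.Perm (univ \ E).toList := List.mergeSort_perm _ _
  have hl : l.Pairwise fun a b => key a ≤ key b := by
    simpa using List.pairwise_mergeSort (le := fun a b => key a ≤ key b)
      (fun a b c => by simpa using le_trans) (fun a b => by simpa using le_total _ _) _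
  have hmem : ∀ e, e ∈ l ↔ e ∉ E := fun e => by simp [hperm.mem_iff]
  refine ⟨l, hperm.nodup_iff.2 (nodup_toList _), hmem, fun k => ?_⟩
  obtain ⟨S, hS, hx, hsub⟩ := hbox (l.get k) ((hmem _).1 (List.get_mem _ _))
  refine ⟨S, hS, hx, fun f hf => ?_⟩
  rw [mem_union, List.mem_toFinset]
  by_cases hfE : f ∈ E
  · exact Or.inl hfE
  by_cases hfx : f = l.get k
  · exact Or.inr (List.mem_take_iff_getElem.2 ⟨k, by simp, hfx.symm⟩)
  exact Or.inr (List.mem_take_succ_of_lt key hl k.isLt ((hmem f).2 hfE) (hsub f hf hfE hfx))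

theorem weakSatHyp_compl_qSet {n d : ℕ} {p : Fin d → ℕ} (hp : ∀ i, 1 ≤ p i) :
    WeakSatHyp n d p (univ \ qSet n d p) := by
  refine weakSatHyp_of_forall_isBox (fun x => ∑ i, (x i : ℕ)) fun x hx => ?_
  obtain ⟨π, hπ⟩ : ∃ π : Equiv.Perm (Fin d), ∀ i, p (π i) ≤ x i + 1 := by simpa [qSet] using hx
  let S i : Finset (Fin n) := Icc ⟨x i + 1 - p (π i), by have := hp (π i); omega⟩ (x i)
  refine ⟨S, ⟨π, fun i => ?_⟩, Fintype.mem_piFinset.2 fun i => ?_, fun f hf _ hne => ?_⟩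
  · have := hπ i; have := hp (π i); simp only [S, Fin.card_Icc]; omega
  · have := hp (π i); simp only [S, mem_Icc, Fin.le_def, le_refl, and_true]; omega
  · have hle i : (f i : ℕ) ≤ x i := (mem_Icc.1 (Fintype.mem_piFinset.1 hf i)).2
    obtain ⟨i, hi⟩ := Function.ne_iff.1 hne
    exact sum_lt_sum (fun i _ => hle i) ⟨i, mem_univ i, (hle i).lt_of_ne (Fin.val_ne_of_ne hi)⟩

theorem WHyp_eq_general (n d : ℕ) (p : Fin d → ℕ) (hmono : Monotone p)
    (hp1 : ∀ i, 1 ≤ p i) :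
    (∀ E : Finset (Fin d → Fin n), WeakSatHyp n d p E →
      n ^ d - qn n d p ≤ E.card) ∧
    WHyp n d p = n ^ d - qn n d p := by
  have hlow E (hE : WeakSatHyp n d p E) := sub_qn_le_card_of_weakSatHyp hmono hE
  have hsat := weakSatHyp_compl_qSet (n := n) hp1
  have hcard : #(univ \ qSet n d p) = n ^ d - qn n d p := by
    rw [card_sdiff_of_subset (subset_univ _), card_qSet hmono, card_univ, Fintype.card_fun,
      Fintype.card_fin, Fintype.card_fin]
  refine ⟨hlow, le_antisymm (Nat.sInf_le ⟨_, hsat, hcard⟩) (le_csInf ⟨_, _, hsat, rfl⟩ ?_)⟩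
  rintro m ⟨E, hE, rfl⟩
  exact hlow E hE

/-- Every weakly `K^d_{p_1,…,p_d}`-saturated hypergraph has at least
`n^d − q_n(p_1,…,p_d)` edges, and `W_n(p_1,…,p_d) = n^d − q_n(p_1,…,p_d)`. -/
theorem WHyp_eq (n d : ℕ) (p : Fin d → ℕ) (hmono : Monotone p)
    (hp1 : ∀ i, 1 ≤ p i) (hpn : ∀ i, p i ≤ n) :
    (∀ E : Finset (Fin d → Fin n), WeakSatHyp n d p E →
      n ^ d - qn n d p ≤ E.card) ∧
    WHyp n d p = n ^ d - qn n d p :=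
  WHyp_eq_general n d p hmono hp1
end

section
/- Let G be a weakly K^d_{p_1,...,p_d}-saturated d-uniform d-partite hypergraph with classes V_1,...,V_d of size n, with saturation process e_1,...,e_h and created copies C_1,...,C_h. Setting A_i = V(G) \ V(C_i), the families A_1,...,A_h and e_1,...,e_h satisfy: A_i ∩ e_i = ∅ for all i; A_i ∩ e_j ≠ ∅ for all i < j; |e_i ∩ V_j| = 1 for all i,j; and for each i there is a permutation π of [d] with |A_i ∩ V_j| = n − p_{π(j)} for all j. Consequently the number of edges of G is at least n^d − Q(n−p_1,...,n−p_d,1,...,1). -/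
/-- The vertices of the `j`-th vertex class, as a subset of the vertex set
`Fin d × Fin n` of a `d`-partite hypergraph with `n` vertices per class. -/
def classV (n d : ℕ) (j : Fin d) : Finset (Fin d × Fin n) :=
  Finset.univ.filter fun u => u.1 = j

/-- The vertex set of the copy spanned by the classes `S_1,…,S_d`. -/
def copyVerts {n d : ℕ} (S : Fin d → Finset (Fin n)) : Finset (Fin d × Fin n) :=
  (Finset.univ : Finset (Fin d)).biUnion fun j => (S j).image fun x => (j, x)

/-- The vertex set of an edge `e ∈ V_1 × ⋯ × V_d`. -/
def edgeVerts {n d : ℕ} (e : Fin d → Fin n) : Finset (Fin d × Fin n) :=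
  (Finset.univ : Finset (Fin d)).image fun j => (j, e j)

open Finset Polynomial

section Vertices

variable {n d : ℕ}

lemma mem_copyVerts (S : Fin d → Finset (Fin n)) (j : Fin d) (c : Fin n) :
    (j, c) ∈ copyVerts S ↔ c ∈ S j := by
  simp [copyVerts]

lemma mem_edgeVerts (e : Fin d → Fin n) (j : Fin d) (c : Fin n) :
    (j, c) ∈ edgeVerts e ↔ e j = c := by
  simp [edgeVerts]

lemma mem_classV (j i : Fin d) (c : Fin n) : (i, c) ∈ classV n d j ↔ i = j := by
  simp [classV]

lemma sdiff_copyVerts_inter_edgeVerts_eq_empty {S : Fin d → Finset (Fin n)}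
    {e : Fin d → Fin n} (he : e ∈ Fintype.piFinset S) :
    (univ \ copyVerts S) ∩ edgeVerts e = ∅ := by
  rw [eq_empty_iff_forall_notMem]
  rintro ⟨j, c⟩
  rw [mem_inter, mem_sdiff, mem_copyVerts, mem_edgeVerts]
  rintro ⟨⟨-, hc⟩, rfl⟩
  exact hc (Fintype.mem_piFinset.1 he j)

lemma sdiff_copyVerts_inter_edgeVerts_nonempty {S : Fin d → Finset (Fin n)}
    {e : Fin d → Fin n} (he : e ∉ Fintype.piFinset S) :
    ((univ \ copyVerts S) ∩ edgeVerts e).Nonempty := by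
  obtain ⟨j, hj⟩ : ∃ j, e j ∉ S j := by simpa [Fintype.mem_piFinset] using he
  exact ⟨(j, e j), by simpa [mem_copyVerts, mem_edgeVerts] using hj⟩

lemma edgeVerts_inter_classV (e : Fin d → Fin n) (j : Fin d) :
    edgeVerts e ∩ classV n d j = {(j, e j)} := by
  ext ⟨i, c⟩
  rw [mem_inter, mem_edgeVerts, mem_classV, mem_singleton, Prod.mk.injEq]
  constructor
  · rintro ⟨rfl, rfl⟩; exact ⟨rfl, rfl⟩
  · rintro ⟨rfl, rfl⟩; exact ⟨rfl, rfl⟩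

lemma card_sdiff_copyVerts_inter_classV (S : Fin d → Finset (Fin n)) (j : Fin d) :
    ((univ \ copyVerts S) ∩ classV n d j).card = n - (S j).card := by
  have : (univ \ copyVerts S) ∩ classV n d j = (S j)ᶜ.map (Function.Embedding.sectR j _) := by
    ext ⟨i, c⟩
    simp only [mem_inter, mem_sdiff, mem_univ, true_and, mem_copyVerts, mem_classV, mem_map,
      mem_compl, Function.Embedding.sectR_apply, Prod.mk.injEq]
    constructor
    · rintro ⟨hc, rfl⟩; exact ⟨c, hc, rfl, rfl⟩
    · rintro ⟨c, hc, rfl, rfl⟩; exact ⟨hc, rfl⟩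
  rw [this, card_map, card_compl, Fintype.card_fin]

end Vertices

lemma linearIndependent_of_triangular {R α ι : Type*} [CommRing R] [NoZeroDivisors R]
    [LinearOrder ι] (v : ι → α → R) (x : ι → α) (hdiag : ∀ k, v k (x k) ≠ 0)
    (hlt : ∀ k k', k < k' → v k (x k') = 0) : LinearIndependent R v := by
  classical
  rw [linearIndependent_iff']
  intro s g hsum i hi
  by_contra hgi
  obtain ⟨k, hk, hmax⟩ := (s.filter (g · ≠ 0)).exists_max_image id ⟨i, mem_filter.2 ⟨hi, hgi⟩⟩
  rw [mem_filter] at hk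
  have hsingle : ∑ j ∈ s, g j * v j (x k) = g k * v k (x k) := by
    refine sum_eq_single_of_mem k hk.1 fun j hj hjk => ?_
    rcases lt_or_gt_of_ne hjk with h | h
    · rw [hlt j k h, mul_zero]
    · have : g j = 0 := by_contra fun hgj => (hmax j (mem_filter.2 ⟨hj, hgj⟩)).not_gt h
      rw [this, zero_mul]
  have hzero : ∑ j ∈ s, g j * v j (x k) = 0 := by simpa using congrFun hsum (x k)
  exact mul_ne_zero hk.2 (hdiag k) (hsingle ▸ hzero)

section BoxPolynomial

variable (K : Type*) [Field K] {n d : ℕ}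

noncomputable def monomialFun (m : Fin d → ℕ) (x : Fin d → Fin n) : K :=
  ∏ j, ((x j : ℕ) : K) ^ m j

noncomputable def complPoly (s : Finset (Fin n)) : K[X] :=
  ∏ c ∈ sᶜ, (X - C ((c : ℕ) : K))

noncomputable def boxFun (S : Fin d → Finset (Fin n)) (x : Fin d → Fin n) : K :=
  ∏ j, (complPoly K (S j)).eval ((x j : ℕ) : K)

lemma natDegree_complPoly (s : Finset (Fin n)) : (complPoly K s).natDegree = n - s.card := by
  rw [complPoly, natDegree_prod_of_monic _ _ fun c _ => monic_X_sub_C _]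
  simp only [natDegree_X_sub_C, sum_const, smul_eq_mul, mul_one, card_compl, Fintype.card_fin]

lemma eval_complPoly_eq_zero_iff [CharZero K] (s : Finset (Fin n)) (c : Fin n) :
    (complPoly K s).eval ((c : ℕ) : K) = 0 ↔ c ∉ s := by
  simp [complPoly, eval_prod, prod_eq_zero_iff, sub_eq_zero, Fin.val_inj]

lemma boxFun_eq_zero_iff [CharZero K] (S : Fin d → Finset (Fin n)) (x : Fin d → Fin n) :
    boxFun K S x = 0 ↔ x ∉ Fintype.piFinset S := by
  simp only [boxFun, prod_eq_zero_iff, mem_univ, true_and, eval_complPoly_eq_zero_iff,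
    Fintype.mem_piFinset, not_forall]

lemma prod_eval_mem_span_monomialFun (P : Fin d → K[X]) (N : Fin d → ℕ)
    (hP : ∀ j, (P j).natDegree < N j) :
    (fun x : Fin d → Fin n => ∏ j, (P j).eval ((x j : ℕ) : K)) ∈
      Submodule.span K
        (monomialFun K '' ↑(Fintype.piFinset fun j => range (N j))) := by
  have hexpand : (fun x : Fin d → Fin n => ∏ j, (P j).eval ((x j : ℕ) : K)) =
      ∑ m ∈ Fintype.piFinset fun j => range (N j), (∏ j, (P j).coeff (m j)) • monomialFun K m := by
    funext x
    simp only [eval_eq_sum_range' (hP _), prod_univ_sum, Finset.sum_apply, Pi.smul_apply,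
      smul_eq_mul, monomialFun, prod_mul_distrib]
  rw [hexpand]
  exact Submodule.sum_mem _ fun m hm =>
    Submodule.smul_mem _ _ (Submodule.subset_span (Set.mem_image_of_mem _ hm))

lemma boxFun_mem_span_monomialFun (S : Fin d → Finset (Fin n)) :
    boxFun K S ∈ Submodule.span K
      (monomialFun K '' ↑(Fintype.piFinset fun j => range (n - (S j).card + 1))) :=
  prod_eval_mem_span_monomialFun K _ _ fun j => by
    rw [natDegree_complPoly]; exact Nat.lt_succ_self _

end BoxPolynomial

theorem card_le_of_triangular_boxes {n d : ℕ} {ι : Type*} [Fintype ι] [LinearOrder ι]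
    (x : ι → Fin d → Fin n) (S : ι → Fin d → Finset (Fin n))
    (hx : ∀ k, x k ∈ Fintype.piFinset (S k))
    (hlt : ∀ k k', k < k' → x k' ∉ Fintype.piFinset (S k))
    (M : Finset (Fin d → ℕ))
    (hM : ∀ k, Fintype.piFinset (fun j => range (n - (S k j).card + 1)) ⊆ M) :
    Fintype.card ι ≤ M.card := by
  classical
  have hli : LinearIndependent ℚ fun k => boxFun ℚ (S k) :=
    linearIndependent_of_triangular _ x
      (fun k => by rw [Ne, boxFun_eq_zero_iff, not_not]; exact hx k)
      (fun k k' h => (boxFun_eq_zero_iff ℚ _ _).2 (hlt k k' h))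
  have hspan : Set.range (fun k => boxFun ℚ (S k)) ⊆
      Submodule.span ℚ
        ((M.image (monomialFun ℚ (n := n)) : Finset _) : Set ((Fin d → Fin n) → ℚ)) := by
    rintro _ ⟨k, rfl⟩
    refine Submodule.span_mono ?_ (boxFun_mem_span_monomialFun ℚ (S k))
    rw [coe_image]
    exact Set.image_mono (coe_subset.2 (hM k))
  calc Fintype.card ι
      ≤ Fintype.card (M.image (monomialFun ℚ (n := n)) : Set ((Fin d → Fin n) → ℚ)) :=
        linearIndependent_le_span_aux' _ hli _ hspan
    _ ≤ M.card := by simpa only [coe_sort_coe, Fintype.card_coe] using card_image_le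

section PermDominated

variable {d : ℕ}

-- The bound `m i ≤ sup a` is implied by the permutation condition; it only makes the set finite.
def permDominated (a : Fin d → ℕ) : Finset (Fin d → ℕ) :=
  {m ∈ Fintype.piFinset fun _ => range (univ.sup a + 1) |
    ∃ π : Equiv.Perm (Fin d), ∀ i, m i ≤ a (π i)}

lemma mem_permDominated {a m : Fin d → ℕ} :
    m ∈ permDominated a ↔ ∃ π : Equiv.Perm (Fin d), ∀ i, m i ≤ a (π i) := by
  refine ⟨fun h => (mem_filter.1 h).2, fun ⟨π, hπ⟩ => mem_filter.2 ⟨?_, π, hπ⟩⟩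
  exact Fintype.mem_piFinset.2 fun i =>
    mem_range.2 (Nat.lt_succ_of_le ((hπ i).trans (le_sup (mem_univ _))))

lemma filter_fst_eq_image_graph {α β : Type*} [Fintype α] [DecidableEq α] [DecidableEq β]
    (g : α → β) (i : α) :
    {u ∈ univ.image fun j => (j, g j) | u.1 = i} = {(i, g i)} := by
  ext ⟨j, b⟩
  simp only [mem_filter, mem_image, mem_univ, true_and, Prod.mk.injEq, mem_singleton]
  constructor
  · rintro ⟨⟨j, rfl, rfl⟩, rfl⟩; exact ⟨rfl, rfl⟩
  · rintro ⟨rfl, rfl⟩; exact ⟨⟨j, rfl, rfl⟩, rfl⟩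

/-- Encodes `m` as the set meeting each `U_i` in the single point `m i + 1`. -/
lemma card_permDominated_le_QQ (a : Fin d → ℕ) : (permDominated a).card ≤ QQ d a fun _ => 1 := by
  classical
  refine card_le_card_of_injOn (fun m => univ.image fun i => (i, m i + 1)) ?_ ?_
  · intro m hm
    obtain ⟨π, hπ⟩ := mem_permDominated.1 hm
    simp only [coe_filter, Set.mem_ofPred_eq, mem_powerset, filter_fst_eq_image_graph,
      image_singleton, singleton_subset_iff, mem_Icc, card_singleton, and_true]
    refine ⟨fun u hu => ?_, π, fun i => ⟨Nat.le_add_left _ _, by have := hπ i; omega⟩⟩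
    obtain ⟨j, -, rfl⟩ := mem_image.1 hu
    have : a (π j) ≤ univ.sup a := le_sup (mem_univ _)
    exact mem_biUnion.2 ⟨j, mem_univ _, mem_image.2 ⟨m j + 1, mem_Icc.2 ⟨by omega, by
      have := hπ j; omega⟩, rfl⟩⟩
  · intro m₁ _ m₂ _ h
    funext i
    have := congrArg (filter fun u : Fin d × ℕ => u.1 = i) h
    simpa only [filter_fst_eq_image_graph, singleton_inj, Prod.mk.injEq, true_and,
      Nat.add_right_cancel_iff] using this

end PermDominated

lemma List.Nodup.get_notMem_of_subset_union_take {α : Type*} [DecidableEq α] {l : List α}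
    (hl : l.Nodup) {E B : Finset α} (hE : ∀ e ∈ l, e ∉ E) {k k' : Fin l.length} (hk : k < k')
    (hB : B ⊆ E ∪ (l.take (k + 1)).toFinset) : l.get k' ∉ B := by
  have hdrop : l.get k' ∈ l.drop (k + 1) := by
    have : k' - (k + 1) < (l.drop (k + 1)).length := by simp; omega
    simpa [Nat.add_sub_cancel' (show k.val + 1 ≤ k' from hk)] using List.getElem_mem this
  intro h
  rcases mem_union.1 (hB h) with hE' | htake
  · exact hE _ (l.get_mem k') hE'
  · exact List.disjoint_take_drop hl le_rfl (List.mem_toFinset.1 htake) hdrop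

theorem saturation_to_two_families_general (n d : ℕ) (p : Fin d → ℕ)
    (E : Finset (Fin d → Fin n)) (l : List (Fin d → Fin n)) (hnd : l.Nodup)
    (henum : ∀ e, e ∈ l ↔ e ∉ E)
    (C : Fin l.length → Fin d → Finset (Fin n))
    (hbox : ∀ k, IsBox p (C k))
    (hmem : ∀ k, l.get k ∈ Fintype.piFinset (C k))
    (hsub : ∀ k : Fin l.length,
      Fintype.piFinset (C k) ⊆ E ∪ (l.take (k.val + 1)).toFinset) :
    (∀ k, (Finset.univ \ copyVerts (C k)) ∩ edgeVerts (l.get k) = ∅) ∧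
    (∀ k k' : Fin l.length, k < k' →
      ((Finset.univ \ copyVerts (C k)) ∩ edgeVerts (l.get k')).Nonempty) ∧
    (∀ k j, (edgeVerts (l.get k) ∩ classV n d j).card = 1) ∧
    (∀ k, ∃ π : Equiv.Perm (Fin d), ∀ j,
      ((Finset.univ \ copyVerts (C k)) ∩ classV n d j).card = n - p (π j)) ∧
    n ^ d - QQ d (fun i => n - p i) (fun _ => 1) ≤ E.card := by
  classical
  have hlater : ∀ k k' : Fin l.length, k < k' → l.get k' ∉ Fintype.piFinset (C k) :=
    fun k k' h => hnd.get_notMem_of_subset_union_take (fun e => (henum e).1) h (hsub k)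
  have hexps : ∀ k, Fintype.piFinset (fun j => range (n - (C k j).card + 1)) ⊆
      permDominated fun i => n - p i := by
    intro k m hm
    obtain ⟨π, hπ⟩ := hbox k
    refine mem_permDominated.2 ⟨π, fun j => ?_⟩
    simpa only [hπ, mem_range, Nat.lt_succ_iff] using Fintype.mem_piFinset.1 hm j
  have hlength : l.length ≤ QQ d (fun i => n - p i) fun _ => 1 := by
    simpa using (card_le_of_triangular_boxes l.get C hmem hlater _ hexps).trans
      (card_permDominated_le_QQ _)
  have hsplit : E.card + l.length = n ^ d := by
    have : l.toFinset = Eᶜ := by ext e; simp [henum e]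
    simpa [← this, List.toFinset_card_of_nodup hnd] using card_add_card_compl E
  refine ⟨fun k => sdiff_copyVerts_inter_edgeVerts_eq_empty (hmem k),
    fun k k' h => sdiff_copyVerts_inter_edgeVerts_nonempty (hlater k k' h),
    fun k j => by rw [edgeVerts_inter_classV, card_singleton], fun k => ?_, by omega⟩
  obtain ⟨π, hπ⟩ := hbox k
  exact ⟨π, fun j => by rw [card_sdiff_copyVerts_inter_classV, hπ]⟩

/-- If `G` (with edge set `E`) has a saturation process `e_1,…,e_h` (the list
`l` of its non-edges) with created copies `C_1,…,C_h`, then the sets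
`A_i = V(G) \ V(C_i)` together with the edges `e_i` satisfy the conditions of
the undirected two-families theorem, and consequently
`|E| ≥ n^d − Q(n−p_1,…,n−p_d,1,…,1)`. -/
theorem saturation_to_two_families (n d : ℕ) (p : Fin d → ℕ)
    (hmono : Monotone p) (hp1 : ∀ i, 1 ≤ p i) (hpn : ∀ i, p i ≤ n)
    (E : Finset (Fin d → Fin n)) (l : List (Fin d → Fin n)) (hnd : l.Nodup)
    (henum : ∀ e, e ∈ l ↔ e ∉ E)
    (C : Fin l.length → Fin d → Finset (Fin n))
    (hbox : ∀ k, IsBox p (C k))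
    (hmem : ∀ k, l.get k ∈ Fintype.piFinset (C k))
    (hsub : ∀ k : Fin l.length,
      Fintype.piFinset (C k) ⊆ E ∪ (l.take (k.val + 1)).toFinset) :
    (∀ k, (Finset.univ \ copyVerts (C k)) ∩ edgeVerts (l.get k) = ∅) ∧
    (∀ k k' : Fin l.length, k < k' →
      ((Finset.univ \ copyVerts (C k)) ∩ edgeVerts (l.get k')).Nonempty) ∧
    (∀ k j, (edgeVerts (l.get k) ∩ classV n d j).card = 1) ∧
    (∀ k, ∃ π : Equiv.Perm (Fin d), ∀ j,
      ((Finset.univ \ copyVerts (C k)) ∩ classV n d j).card = n - p (π j)) ∧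
    n ^ d - QQ d (fun i => n - p i) (fun _ => 1) ≤ E.card :=
  saturation_to_two_families_general n d p E l hnd henum C hbox hmem hsub
end

section
/- Let q ≥ 1 and n ≥ q. Every n × n bipartite graph G on classes X, Y that is strongly K_{1,q}-saturated (adding any missing edge creates a copy of K_{1,q} in either orientation) has at least (q−1)n − ⌊(q−1)^2/4⌋ edges. -/
/-- An `n × n` bipartite graph with edge set `E ⊆ X × Y = Fin n × Fin n` is
strongly `K_{p,q}`-saturated (in either orientation) if adding any missing
edge creates a copy of `K_{p,q}` containing that edge, where the side of
size `p` may lie in either class. -/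
def StrongSatBip (n p q : ℕ) (E : Finset (Fin n × Fin n)) : Prop :=
  ∀ e : Fin n × Fin n, e ∉ E → ∃ S T : Finset (Fin n),
    ((S.card = p ∧ T.card = q) ∨ (S.card = q ∧ T.card = p)) ∧
    e ∈ S ×ˢ T ∧ (S ×ˢ T : Finset (Fin n × Fin n)) ⊆ insert e E

/-- Every strongly `K_{1,q}`-saturated `n × n` bipartite graph has at least
`(q−1)n − ⌊(q−1)²/4⌋` edges. -/
theorem strong_sat_one_q (n q : ℕ) (hq : 1 ≤ q) (hqn : q ≤ n)
    (E : Finset (Fin n × Fin n)) (hE : StrongSatBip n 1 q E) :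
    (q - 1) * n - (q - 1) ^ 2 / 4 ≤ E.card := by
  classical
  set r := q - 1 with hr
  set F : Fin n → Finset (Fin n × Fin n) := fun x => E.filter (fun e => e.1 = x) with hF
  set G : Fin n → Finset (Fin n × Fin n) := fun y => E.filter (fun e => e.2 = y) with hG
  -- key claim: for any non-edge, one endpoint has degree ≥ r = q-1
  have claim : ∀ x y : Fin n, (x, y) ∉ E → r ≤ (F x).card ∨ r ≤ (G y).card := by
    intro x y hxy
    obtain ⟨S, T, hcard, hmem, hsub⟩ := hE (x, y) hxy
    rw [Finset.mem_product] at hmem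
    rcases hcard with ⟨hS, hT⟩ | ⟨hS, hT⟩
    · left
      have hSx : S = {x} := by
        obtain ⟨a, ha⟩ := Finset.card_eq_one.mp hS
        have hx := hmem.1
        rw [ha, Finset.mem_singleton] at hx
        have hx' : x = a := hx
        rw [ha, hx']
      have hmaps : ∀ t ∈ T.erase y, (x, t) ∈ F x := by
        intro t ht
        have htT := Finset.mem_of_mem_erase ht
        have hne : t ≠ y := Finset.ne_of_mem_erase ht
        have hmem' : (x, t) ∈ insert ((x : Fin n), y) E := by
          apply hsub
          rw [Finset.mem_product, hSx]
          exact ⟨Finset.mem_singleton_self x, htT⟩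
        rcases Finset.mem_insert.mp hmem' with h | h
        · exact absurd (Prod.ext_iff.mp h).2 hne
        · exact Finset.mem_filter.mpr ⟨h, rfl⟩
      calc r = (T.erase y).card := by rw [Finset.card_erase_of_mem hmem.2, hT]
        _ ≤ (F x).card := Finset.card_le_card_of_injOn (fun t => (x, t)) hmaps
            (fun a _ b _ h => (Prod.ext_iff.mp h).2)
    · right
      have hTy : T = {y} := by
        obtain ⟨a, ha⟩ := Finset.card_eq_one.mp hT
        have hy := hmem.2
        rw [ha, Finset.mem_singleton] at hy
        have hy' : y = a := hy
        rw [ha, hy']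
      have hmaps : ∀ s ∈ S.erase x, (s, y) ∈ G y := by
        intro s hs
        have hsS := Finset.mem_of_mem_erase hs
        have hne : s ≠ x := Finset.ne_of_mem_erase hs
        have hmem' : (s, y) ∈ insert ((x : Fin n), y) E := by
          apply hsub
          rw [Finset.mem_product, hTy]
          exact ⟨hsS, Finset.mem_singleton_self y⟩
        rcases Finset.mem_insert.mp hmem' with h | h
        · exact absurd (Prod.ext_iff.mp h).1 hne
        · exact Finset.mem_filter.mpr ⟨h, rfl⟩
      calc r = (S.erase x).card := by rw [Finset.card_erase_of_mem hmem.1, hS]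
        _ ≤ (G y).card := Finset.card_le_card_of_injOn (fun s => (s, y)) hmaps
            (fun a _ b _ h => (Prod.ext_iff.mp h).1)
  set A := Finset.univ.filter (fun x : Fin n => (F x).card < r) with hA
  set B := Finset.univ.filter (fun y : Fin n => (G y).card < r) with hB
  have hAB : ∀ x ∈ A, ∀ y ∈ B, (x, y) ∈ E := by
    intro x hx y hy
    by_contra h
    rcases claim x y h with h' | h'
    · exact absurd h' (not_le.mpr (Finset.mem_filter.mp hx).2)
    · exact absurd h' (not_le.mpr (Finset.mem_filter.mp hy).2)
  have hrowA : ∀ x ∈ A, B.card ≤ (F x).card := by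
    intro x hx
    apply Finset.card_le_card_of_injOn (fun y => (x, y))
    · intro y hy; exact Finset.mem_filter.mpr ⟨hAB x hx y hy, rfl⟩
    · intro a _ b _ h; exact (Prod.ext_iff.mp h).2
  have hcolB : ∀ y ∈ B, A.card ≤ (G y).card := by
    intro y hy
    apply Finset.card_le_card_of_injOn (fun x => (x, y))
    · intro x hx; exact Finset.mem_filter.mpr ⟨hAB x hx y hy, rfl⟩
    · intro a _ b _ h; exact (Prod.ext_iff.mp h).1
  have hsumF : E.card = ∑ x, (F x).card :=
    Finset.card_eq_sum_card_fiberwise (fun e _ => Finset.mem_univ e.1)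
  have hsumG : E.card = ∑ y, (G y).card :=
    Finset.card_eq_sum_card_fiberwise (fun e _ => Finset.mem_univ e.2)
  have hAn : A.card ≤ n := by
    simpa using (Finset.card_le_univ A)
  have hBn : B.card ≤ n := by
    simpa using (Finset.card_le_univ B)
  -- first lower bound
  have hE1 : A.card * B.card + (n - A.card) * r ≤ E.card := by
    rw [hsumF]
    rw [← Finset.sum_filter_add_sum_filter_not Finset.univ (fun x => (F x).card < r)
      (fun x => (F x).card)]
    have h1 : A.card * B.card ≤ ∑ x ∈ A, (F x).card := by
      calc A.card * B.card = ∑ _x ∈ A, B.card := by rw [Finset.sum_const, smul_eq_mul]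
        _ ≤ ∑ x ∈ A, (F x).card := Finset.sum_le_sum hrowA
    have hcompl : (Finset.univ.filter (fun x : Fin n => ¬ (F x).card < r)).card = n - A.card := by
      have := Finset.card_filter_add_card_filter_not (s := Finset.univ)
        (p := fun x : Fin n => (F x).card < r)
      rw [← hA] at this
      simp only [Finset.card_univ, Fintype.card_fin] at this
      omega
    have h2 : (n - A.card) * r ≤
        ∑ x ∈ Finset.univ.filter (fun x : Fin n => ¬ (F x).card < r), (F x).card := by
      calc (n - A.card) * r
          = ∑ _x ∈ Finset.univ.filter (fun x : Fin n => ¬ (F x).card < r), r := by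
            rw [Finset.sum_const, smul_eq_mul, hcompl]
        _ ≤ _ := Finset.sum_le_sum (fun x hx => le_of_not_gt (Finset.mem_filter.mp hx).2)
    exact Nat.add_le_add h1 h2
  -- second lower bound
  have hE2 : A.card * B.card + (n - B.card) * r ≤ E.card := by
    rw [hsumG]
    rw [← Finset.sum_filter_add_sum_filter_not Finset.univ (fun y => (G y).card < r)
      (fun y => (G y).card)]
    have h1 : A.card * B.card ≤ ∑ y ∈ B, (G y).card := by
      calc A.card * B.card = ∑ _y ∈ B, A.card := by
            rw [Finset.sum_const, smul_eq_mul, mul_comm]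
        _ ≤ ∑ y ∈ B, (G y).card := Finset.sum_le_sum hcolB
    have hcompl : (Finset.univ.filter (fun y : Fin n => ¬ (G y).card < r)).card = n - B.card := by
      have := Finset.card_filter_add_card_filter_not (s := Finset.univ)
        (p := fun y : Fin n => (G y).card < r)
      rw [← hB] at this
      simp only [Finset.card_univ, Fintype.card_fin] at this
      omega
    have h2 : (n - B.card) * r ≤
        ∑ y ∈ Finset.univ.filter (fun y : Fin n => ¬ (G y).card < r), (G y).card := by
      calc (n - B.card) * r
          = ∑ _y ∈ Finset.univ.filter (fun y : Fin n => ¬ (G y).card < r), r := by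
            rw [Finset.sum_const, smul_eq_mul, hcompl]
        _ ≤ _ := Finset.sum_le_sum (fun y hy => le_of_not_gt (Finset.mem_filter.mp hy).2)
    exact Nat.add_le_add h1 h2
  set m := min A.card B.card with hm
  have hmn : m ≤ n := le_trans (min_le_left _ _) hAn
  have key : m * m + (n - m) * r ≤ E.card := by
    rcases le_total A.card B.card with h | h
    · have hm' : m = A.card := min_eq_left h
      rw [hm']
      calc A.card * A.card + (n - A.card) * r
          ≤ A.card * B.card + (n - A.card) * r := by
            exact Nat.add_le_add_right (Nat.mul_le_mul_left _ h) _
        _ ≤ E.card := hE1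
    · have hm' : m = B.card := min_eq_right h
      rw [hm']
      calc B.card * B.card + (n - B.card) * r
          ≤ A.card * B.card + (n - B.card) * r := by
            exact Nat.add_le_add_right (Nat.mul_le_mul_right _ h) _
        _ ≤ E.card := hE2
  -- arithmetic: m*r ≤ m*m + r*r/4
  have h4 : 4 * (m * r) ≤ 4 * (m * m) + r * r := by
    zify
    nlinarith [sq_nonneg (2 * (m : ℤ) - r)]
  have h2 : m * r ≤ m * m + r * r / 4 := by
    set MR := m * r with hMR
    set MM := m * m with hMM
    set RR := r * r with hRR
    omega
  have e1 : (n - m) * r + m * r = n * r := by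
    rw [← Nat.add_mul, Nat.sub_add_cancel hmn]
  have h3 : r * n ≤ E.card + r * r / 4 := by
    calc r * n = (n - m) * r + m * r := by rw [mul_comm]; exact e1.symm
      _ ≤ (n - m) * r + (m * m + r * r / 4) := Nat.add_le_add_left h2 _
      _ = (m * m + (n - m) * r) + r * r / 4 := by ring
      _ ≤ E.card + r * r / 4 := Nat.add_le_add_right key _
  have hpow : r ^ 2 = r * r := sq r
  calc r * n - r ^ 2 / 4 = r * n - r * r / 4 := by rw [hpow]
    _ ≤ E.card := Nat.sub_le_iff_le_add.mpr h3
end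

section
/- Let 2 ≤ p ≤ q, k = ⌊(q−p)/2⌋, and let n be large enough that p − 1 + k + (q−1 choices) fit, i.e., n ≥ p + q. Let G be an n × n bipartite graph having p−1 vertices in each class complete to the other class, k additional vertices in each class spanning a complete K_{k,k} between them, and all remaining vertices of degree exactly q−1 (with neighbors among the p−1 complete vertices plus q−p others arbitrary, consistent with these constraints). Then G is strongly K_{p,q}-saturated and has (p+q−2)n − (p−1)(q−1) − k(q−p−k) edges, hence S_n(p,q) ≤ (p+q−2)n − (p−1)(q−1) − ⌊(q−p)^2/4⌋. -/
/-- `S_n(p,q)`: the minimum number of edges of a strongly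
`K_{p,q}`-saturated `n × n` bipartite graph. -/
noncomputable def Sbip (n p q : ℕ) : ℕ :=
  sInf {m | ∃ E : Finset (Fin n × Fin n), StrongSatBip n p q E ∧ E.card = m}

private lemma strong_sat_key (a k s m : ℕ) :
    (a+1) * (a+1+k+m) + k * (a+1+k) + m * (a+1+k+s)
      = (2*a+2+k+s) * (a+1+k+m) - (a+1)*(a+1+k+s) - k*s := by
  rw [Nat.sub_sub]
  symm
  apply Nat.sub_eq_of_eq_add
  ring

/-- Let `2 ≤ p ≤ q`, `k = ⌊(q−p)/2⌋` and `n ≥ p + q`. Suppose the `n × n`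
bipartite graph `E` has its first `p−1` vertices of each class complete to
the other class, its next `k` vertices of each class spanning a complete
`K_{k,k}` (and with no further edges: each such vertex has degree exactly
`p−1+k`), and all remaining vertices of degree exactly `q−1`. Then `E` is
strongly `K_{p,q}`-saturated and has
`(p+q−2)n − (p−1)(q−1) − k(q−p−k)` edges; hence
`S_n(p,q) ≤ (p+q−2)n − (p−1)(q−1) − ⌊(q−p)²/4⌋`. -/
theorem strong_sat_construction (n p q k : ℕ) (hp : 2 ≤ p) (hpq : p ≤ q)
    (hk : k = (q - p) / 2) (hn : p + q ≤ n)
    (E : Finset (Fin n × Fin n))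
    (hcomp : ∀ e : Fin n × Fin n, e.1.val < p - 1 ∨ e.2.val < p - 1 → e ∈ E)
    (hclq : ∀ e : Fin n × Fin n,
      p - 1 ≤ e.1.val → e.1.val < p - 1 + k → p - 1 ≤ e.2.val →
        e.2.val < p - 1 + k → e ∈ E)
    (hclqdegX : ∀ x : Fin n, p - 1 ≤ x.val → x.val < p - 1 + k →
      (E.filter fun e => e.1 = x).card = p - 1 + k)
    (hclqdegY : ∀ y : Fin n, p - 1 ≤ y.val → y.val < p - 1 + k →
      (E.filter fun e => e.2 = y).card = p - 1 + k)
    (hremdegX : ∀ x : Fin n, p - 1 + k ≤ x.val →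
      (E.filter fun e => e.1 = x).card = q - 1)
    (hremdegY : ∀ y : Fin n, p - 1 + k ≤ y.val →
      (E.filter fun e => e.2 = y).card = q - 1) :
    StrongSatBip n p q E ∧
    E.card = (p + q - 2) * n - (p - 1) * (q - 1) - k * (q - p - k) ∧
    Sbip n p q ≤ (p + q - 2) * n - (p - 1) * (q - 1) - (q - p) ^ 2 / 4 := by
  classical
  have hCbound : ∀ m' ∈ Finset.range (p - 1), m' < n := by
    intro m' hm'; have := Finset.mem_range.mp hm'; omega
  set C : Finset (Fin n) := (Finset.range (p-1)).attachFin hCbound with hC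
  have hCcard : C.card = p - 1 := by
    rw [hC, Finset.card_attachFin, Finset.card_range]
  have hCmem : ∀ a : Fin n, a ∈ C ↔ a.val < p - 1 := by
    intro a; rw [hC, Finset.mem_attachFin, Finset.mem_range]
  -- saturation
  have hsat : StrongSatBip n p q E := by
    intro e he
    obtain ⟨x, y⟩ := e
    have hx : ¬ x.val < p - 1 := fun h => he (hcomp (x,y) (Or.inl h))
    have hy : ¬ y.val < p - 1 := fun h => he (hcomp (x,y) (Or.inr h))
    have hcases : p - 1 + k ≤ x.val ∨ p - 1 + k ≤ y.val := by
      by_contra h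
      push_neg at h
      exact he (hclq (x,y) (show p - 1 ≤ x.val by omega) (show x.val < p - 1 + k by omega)
        (show p - 1 ≤ y.val by omega) (show y.val < p - 1 + k by omega))
    rcases hcases with hxr | hyr
    · -- x is a "remaining" vertex
      set N : Finset (Fin n) := (E.filter fun e => e.1 = x).image Prod.snd with hN
      have hNmem : ∀ b, b ∈ N → (x, b) ∈ E := by
        intro b hb
        obtain ⟨e', he', hee⟩ := Finset.mem_image.mp hb
        obtain ⟨h1, h2⟩ := Finset.mem_filter.mp he'
        have : e' = (x, b) := Prod.ext_iff.mpr ⟨h2, hee⟩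
        rwa [this] at h1
      have hNcard : N.card = q - 1 := by
        rw [hN, Finset.card_image_of_injOn, hremdegX x hxr]
        intro u hu v hv huv
        have h1 := (Finset.mem_filter.mp hu).2
        have h2 := (Finset.mem_filter.mp hv).2
        exact Prod.ext_iff.mpr ⟨h1.trans h2.symm, huv⟩
      have hyN : y ∉ N := fun h => he (hNmem y h)
      have hxC : x ∉ C := fun h => by have := (hCmem x).mp h; omega
      refine ⟨insert x C, insert y N, Or.inl ⟨?_, ?_⟩, ?_, ?_⟩
      · rw [Finset.card_insert_of_notMem hxC, hCcard]; omega
      · rw [Finset.card_insert_of_notMem hyN, hNcard]; omega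
      · exact Finset.mem_product.mpr ⟨Finset.mem_insert_self _ _, Finset.mem_insert_self _ _⟩
      · rintro ⟨u, v⟩ huv
        obtain ⟨hu, hv⟩ := Finset.mem_product.mp huv
        rcases Finset.mem_insert.mp hu with rfl | huC
        · rcases Finset.mem_insert.mp hv with rfl | hvN
          · exact Finset.mem_insert_self _ _
          · exact Finset.mem_insert_of_mem (hNmem v hvN)
        · exact Finset.mem_insert_of_mem (hcomp (u,v) (Or.inl ((hCmem u).mp huC)))
    · -- y is a "remaining" vertex
      set N : Finset (Fin n) := (E.filter fun e => e.2 = y).image Prod.fst with hN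
      have hNmem : ∀ b, b ∈ N → (b, y) ∈ E := by
        intro b hb
        obtain ⟨e', he', hee⟩ := Finset.mem_image.mp hb
        obtain ⟨h1, h2⟩ := Finset.mem_filter.mp he'
        have : e' = (b, y) := Prod.ext_iff.mpr ⟨hee, h2⟩
        rwa [this] at h1
      have hNcard : N.card = q - 1 := by
        rw [hN, Finset.card_image_of_injOn, hremdegY y hyr]
        intro u hu v hv huv
        have h1 := (Finset.mem_filter.mp hu).2
        have h2 := (Finset.mem_filter.mp hv).2
        exact Prod.ext_iff.mpr ⟨huv, h1.trans h2.symm⟩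
      have hxN : x ∉ N := fun h => he (hNmem x h)
      have hyC : y ∉ C := fun h => by have := (hCmem y).mp h; omega
      refine ⟨insert x N, insert y C, Or.inr ⟨?_, ?_⟩, ?_, ?_⟩
      · rw [Finset.card_insert_of_notMem hxN, hNcard]; omega
      · rw [Finset.card_insert_of_notMem hyC, hCcard]; omega
      · exact Finset.mem_product.mpr ⟨Finset.mem_insert_self _ _, Finset.mem_insert_self _ _⟩
      · rintro ⟨u, v⟩ huv
        obtain ⟨hu, hv⟩ := Finset.mem_product.mp huv
        rcases Finset.mem_insert.mp hv with rfl | hvC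
        · rcases Finset.mem_insert.mp hu with rfl | huN
          · exact Finset.mem_insert_self _ _
          · exact Finset.mem_insert_of_mem (hNmem u huN)
        · exact Finset.mem_insert_of_mem (hcomp (u,v) (Or.inr ((hCmem v).mp hvC)))
  -- degrees of complete vertices
  have hdegcomp : ∀ x : Fin n, x.val < p - 1 → (E.filter fun e => e.1 = x).card = n := by
    intro x hx
    have himg : (E.filter fun e => e.1 = x) = Finset.univ.image (fun y : Fin n => (x, y)) := by
      ext e
      simp only [Finset.mem_filter, Finset.mem_image, Finset.mem_univ, true_and]
      constructor
      · rintro ⟨_, h⟩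
        exact ⟨e.2, Prod.ext_iff.mpr ⟨h.symm, rfl⟩⟩
      · rintro ⟨y', rfl⟩
        exact ⟨hcomp _ (Or.inl hx), rfl⟩
    rw [himg, Finset.card_image_of_injective _ (fun a b hab => (Prod.ext_iff.mp hab).2),
      Finset.card_univ, Fintype.card_fin]
  -- edge count by fibers
  have hcount : E.card = (p-1)*n + k*(p-1+k) + (n-(p-1)-k)*(q-1) := by
    have hfib : E.card = ∑ x : Fin n, (E.filter fun e => e.1 = x).card :=
      Finset.card_eq_sum_card_fiberwise (fun e _ => Finset.mem_univ e.1)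
    rw [hfib, ← Finset.sum_filter_add_sum_filter_not Finset.univ
        (fun x : Fin n => x.val < p - 1),
      ← Finset.sum_filter_add_sum_filter_not
        (Finset.univ.filter fun x : Fin n => ¬ x.val < p - 1)
        (fun x : Fin n => x.val < p - 1 + k),
      Finset.filter_filter, Finset.filter_filter]
    have c1 : (Finset.univ.filter fun x : Fin n => x.val < p - 1).card = p - 1 := by
      have : (Finset.univ.filter fun x : Fin n => x.val < p - 1)
          = (Finset.range (p-1)).attachFin hCbound := by
        ext a
        simp only [Finset.mem_filter, Finset.mem_univ, true_and, Finset.mem_attachFin,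
          Finset.mem_range]
      rw [this, Finset.card_attachFin, Finset.card_range]
    have hBbound : ∀ m' ∈ Finset.Ico (p-1) (p-1+k), m' < n := by
      intro m' hm'; have := Finset.mem_Ico.mp hm'; omega
    have c2 : (Finset.univ.filter fun x : Fin n => ¬ x.val < p - 1 ∧ x.val < p - 1 + k).card
        = k := by
      have : (Finset.univ.filter fun x : Fin n => ¬ x.val < p - 1 ∧ x.val < p - 1 + k)
          = (Finset.Ico (p-1) (p-1+k)).attachFin hBbound := by
        ext a
        simp only [Finset.mem_filter, Finset.mem_univ, true_and, Finset.mem_attachFin,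
          Finset.mem_Ico]
        omega
      rw [this, Finset.card_attachFin, Nat.card_Ico]
      omega
    have hDbound : ∀ m' ∈ Finset.Ico (p-1+k) n, m' < n := by
      intro m' hm'; have := Finset.mem_Ico.mp hm'; omega
    have c3 : (Finset.univ.filter
          fun x : Fin n => ¬ x.val < p - 1 ∧ ¬ x.val < p - 1 + k).card
        = n - (p-1) - k := by
      have : (Finset.univ.filter fun x : Fin n => ¬ x.val < p - 1 ∧ ¬ x.val < p - 1 + k)
          = (Finset.Ico (p-1+k) n).attachFin hDbound := by
        ext a
        simp only [Finset.mem_filter, Finset.mem_univ, true_and, Finset.mem_attachFin,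
          Finset.mem_Ico]
        omega
      rw [this, Finset.card_attachFin, Nat.card_Ico]
      omega
    have s1 : ∑ x ∈ (Finset.univ.filter fun x : Fin n => x.val < p - 1),
        (E.filter fun e => e.1 = x).card = (p-1) * n := by
      rw [Finset.sum_congr rfl (fun x hx => hdegcomp x ((Finset.mem_filter.mp hx).2)),
        Finset.sum_const, c1, smul_eq_mul]
    have s2 : ∑ x ∈ (Finset.univ.filter
          fun x : Fin n => ¬ x.val < p - 1 ∧ x.val < p - 1 + k),
        (E.filter fun e => e.1 = x).card = k * (p-1+k) := by
      rw [Finset.sum_congr rfl (fun x hx => by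
        have h := (Finset.mem_filter.mp hx).2
        exact hclqdegX x (by omega) h.2), Finset.sum_const, c2, smul_eq_mul]
    have s3 : ∑ x ∈ (Finset.univ.filter
          fun x : Fin n => ¬ x.val < p - 1 ∧ ¬ x.val < p - 1 + k),
        (E.filter fun e => e.1 = x).card = (n-(p-1)-k) * (q-1) := by
      rw [Finset.sum_congr rfl (fun x hx => by
        have h := (Finset.mem_filter.mp hx).2
        exact hremdegX x (by omega)), Finset.sum_const, c3, smul_eq_mul]
    rw [s1, s2, s3]
    ring
  have hquart : k * (q - p - k) = (q - p) ^ 2 / 4 := by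
    have h1 : q - p = 2*k ∨ q - p = 2*k+1 := by omega
    rcases h1 with h | h <;> rw [h]
    · rw [show 2*k - k = k by omega, show (2*k)^2 = 4*(k*k) by ring]
      generalize k * k = t
      omega
    · rw [show 2*k+1 - k = k+1 by omega, show (2*k+1)^2 = 4*(k*(k+1))+1 by ring]
      generalize k * (k+1) = t
      omega
  obtain ⟨a, rfl⟩ : ∃ a, p = a + 2 := ⟨p - 2, by omega⟩
  obtain ⟨s, rfl⟩ : ∃ s, q = a + 2 + k + s := ⟨q - (a+2) - k, by omega⟩
  obtain ⟨m, rfl⟩ : ∃ m, n = a + 1 + k + m := ⟨n - (a+1) - k, by omega⟩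
  have goal2 : E.card = (a + 2 + (a + 2 + k + s) - 2) * (a + 1 + k + m)
      - (a + 2 - 1) * (a + 2 + k + s - 1) - k * (a + 2 + k + s - (a + 2) - k) := by
    rw [hcount]
    have h1 : a + 2 + (a + 2 + k + s) - 2 = 2*a+2+k+s := by omega
    have h2 : a + 2 - 1 = a + 1 := by omega
    have h3 : a + 2 + k + s - 1 = a+1+k+s := by omega
    have h4 : a + 2 + k + s - (a + 2) - k = s := by omega
    rw [h1, h2, h3, h4, show a + 1 + k + m - (a + 1) - k = m from by omega]
    exact strong_sat_key a k s m
  refine ⟨hsat, goal2, ?_⟩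
  rw [← hquart]
  exact le_of_le_of_eq (Nat.sInf_le ⟨E, hsat, rfl⟩) goal2
end
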